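/- arXiv:math/0505386 — 6 statements merged into one kernel-verified Lean document; each statement's English description precedes it below -/
import Mathlib

section
/- Let k ∈ N and A, B ∈ R, and let M0 be the (k+1)×(k+1) matrix with diagonal entries A, superdiagonal entries (M0)_{ℓ,ℓ+1} = (ℓ+1)B for ℓ = 0,…,k−1 (0-indexed rows/columns), and subdiagonal entries (M0)_{ℓ+1,ℓ} = −(k−ℓ)B, all other entries zero. If k is odd, then det(M0 − λI) = ((A−λ)² + B²)((A−λ)² + (3B)²)···((A−λ)² + (kB)²). -/
noncomputable section

/-- The `(k+1)×(k+1)` tridiagonal matrix with diagonal `A`, superdiagonal entries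
`(ℓ+1)B` and subdiagonal entries `−(k−ℓ)B` (0-indexed). -/
def M0 (k : ℕ) (A B : ℝ) : Matrix (Fin (k+1)) (Fin (k+1)) ℝ :=
  fun i j =>
    if (i : ℕ) = (j : ℕ) then A
    else if (j : ℕ) = (i : ℕ) + 1 then ((i : ℕ) + 1 : ℝ) * B
    else if (i : ℕ) = (j : ℕ) + 1 then -((k : ℝ) - (j : ℕ)) * B
    else 0

namespace KacAux
open Polynomial Complex Finset Matrix

/-- The eigen-polynomial `(X - i)^j (X + i)^(k-j)`. -/
def pp (k j : ℕ) : Polynomial ℂ := (X - C I)^j * (X + C I)^(k - j)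

lemma haux (a : Polynomial ℂ) (n : ℕ) :
    a * ((n : Polynomial ℂ) * a^(n-1)) = (n : Polynomial ℂ) * a^n := by
  cases n with
  | zero => simp
  | succ m => rw [Nat.add_sub_cancel, pow_succ]; ring

lemma ode (k j : ℕ) (hj : j ≤ k) :
    ((X:Polynomial ℂ)^2 + 1) * derivative (pp k j)
      = ((k : Polynomial ℂ) * X + C (I * (2*(j:ℂ) - k))) * pp k j := by
  have hfac : ((X:Polynomial ℂ)^2 + 1) = (X - C I) * (X + C I) := by
    have : (C I : Polynomial ℂ) * C I = -1 := by
      rw [← C_mul, Complex.I_mul_I]; simp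
    have h2 : (C I : Polynomial ℂ)^2 = -1 := by rw [sq, this]
    ring_nf
    rw [h2]; ring
  have hD : derivative (pp k j)
      = ((j : Polynomial ℂ) * (X - C I)^(j-1)) * (X + C I)^(k-j)
        + (X - C I)^j * (((k-j : ℕ) : Polynomial ℂ) * (X + C I)^(k-j-1)) := by
    unfold pp
    rw [derivative_mul, derivative_pow, derivative_pow]
    simp
  rw [hD, hfac]
  have h1 : (X - C I) * (X + C I) *
      (((j : Polynomial ℂ) * (X - C I)^(j-1)) * (X + C I)^(k-j))
      = (j : Polynomial ℂ) * (X + C I) * pp k j := by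
    unfold pp
    have := haux (X - C I) j
    calc (X - C I) * (X + C I) * (((j : Polynomial ℂ) * (X - C I)^(j-1)) * (X + C I)^(k-j))
        = ((X - C I) * ((j : Polynomial ℂ) * (X - C I)^(j-1))) * ((X + C I) * (X + C I)^(k-j)) := by ring
      _ = ((j : Polynomial ℂ) * (X - C I)^j) * ((X + C I) * (X + C I)^(k-j)) := by rw [this]
      _ = _ := by ring
  have h2 : (X - C I) * (X + C I) *
      ((X - C I)^j * (((k-j : ℕ) : Polynomial ℂ) * (X + C I)^(k-j-1)))
      = ((k-j : ℕ) : Polynomial ℂ) * (X - C I) * pp k j := by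
    unfold pp
    have := haux (X + C I) (k - j)
    calc (X - C I) * (X + C I) * ((X - C I)^j * (((k-j : ℕ) : Polynomial ℂ) * (X + C I)^(k-j-1)))
        = ((X + C I) * (((k-j:ℕ) : Polynomial ℂ) * (X + C I)^(k-j-1))) * ((X - C I) * (X - C I)^j) := by ring
      _ = (((k-j:ℕ) : Polynomial ℂ) * (X + C I)^(k-j)) * ((X - C I) * (X - C I)^j) := by rw [this]
      _ = _ := by ring
  rw [mul_add, h1, h2]
  have hcast : ((k - j : ℕ) : Polynomial ℂ) = (k : Polynomial ℂ) - j := by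
    push_cast [Nat.cast_sub hj]; ring
  rw [hcast]
  have hC : (C (I * (2*(j:ℂ) - k)) : Polynomial ℂ)
      = (2 * (j : Polynomial ℂ) - k) * C I := by
    rw [_root_.map_mul]
    have : (C (2*(j:ℂ) - k) : Polynomial ℂ) = 2 * (j : Polynomial ℂ) - k := by
      simp [map_sub, _root_.map_mul, map_ofNat, C_eq_natCast]
    rw [this]; ring
  rw [hC]
  ring


lemma coeff_gt (k j m : ℕ) (hj : j ≤ k) (hm : k < m) : (pp k j).coeff m = 0 := by
  apply coeff_eq_zero_of_natDegree_lt
  calc (pp k j).natDegree ≤ ((X - C I)^j).natDegree + ((X + C I)^(k-j)).natDegree :=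
        natDegree_mul_le
    _ ≤ j * 1 + (k - j) * 1 := by
        gcongr <;> [exact natDegree_pow_le_of_le _ (natDegree_X_sub_C_le I);
          exact natDegree_pow_le_of_le _ (le_of_eq (natDegree_X_add_C I))]
    _ ≤ k := by omega
    _ < m := hm

lemma rec0 (k j : ℕ) (hj : j ≤ k) :
    (pp k j).coeff 1 = I * (2*(j:ℂ) - k) * (pp k j).coeff 0 := by
  have h := congrArg (fun q => Polynomial.coeff q 0) (ode k j hj)
  have hr : ((k : Polynomial ℂ) * X + C (I * (2*(j:ℂ) - k))) * pp k j
      = C (k:ℂ) * (X * pp k j) + C (I * (2*(j:ℂ) - k)) * pp k j := by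
    rw [C_eq_natCast]; ring
  rw [hr] at h
  simp only [mul_coeff_zero, coeff_add, coeff_one, coeff_X_pow, coeff_C_mul,
    coeff_derivative, mul_coeff_zero, coeff_X_zero] at h
  simp at h
  linear_combination h

lemma recn (k j n : ℕ) (hj : j ≤ k) :
    ((n:ℂ) + 2) * (pp k j).coeff (n+2)
      = ((k:ℂ) - n) * (pp k j).coeff n + I * (2*(j:ℂ) - k) * (pp k j).coeff (n+1) := by
  have h := congrArg (fun q => Polynomial.coeff q (n+1)) (ode k j hj)
  rw [add_mul, mul_comm ((X:Polynomial ℂ)^2) (derivative (pp k j)), one_mul,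
    coeff_add, coeff_mul_X_pow'] at h
  have hX2 : (if 2 ≤ n + 1 then (derivative (pp k j)).coeff (n+1-2) else 0)
      = (n:ℂ) * (pp k j).coeff n := by
    rcases n with _ | m
    · simp
    · rw [if_pos (by omega)]
      simp only [show m + 1 + 1 - 2 = m from by omega, coeff_derivative]
      push_cast; ring
  have hr : ((k : Polynomial ℂ) * X + C (I * (2*(j:ℂ) - k))) * pp k j
      = C (k:ℂ) * (X * pp k j) + C (I * (2*(j:ℂ) - k)) * pp k j := by
    rw [C_eq_natCast]; ring
  rw [hX2, hr, coeff_add, coeff_C_mul, coeff_C_mul, coeff_X_mul, coeff_derivative] at h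
  push_cast at h
  linear_combination h

/-- the eigenvector matrix: column `j` is the coefficient vector of `pp k j`. -/
def Pm (k : ℕ) : Matrix (Fin (k+1)) (Fin (k+1)) ℂ := fun ℓ j => (pp k j).coeff ℓ

/-- tridiagonal nilpotent-like part -/
def Nm (k : ℕ) : Matrix (Fin (k+1)) (Fin (k+1)) ℂ := fun ℓ m =>
  (if (m:ℕ) = (ℓ:ℕ)+1 then ((ℓ:ℕ)+1 : ℂ) else 0)
  + (if (ℓ:ℕ) = (m:ℕ)+1 then -((k:ℂ) - (m:ℕ)) else 0)

lemma sum_single (k t : ℕ) (f : ℕ → ℂ) (hf : ∀ m, k < m → f m = 0) :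
    (∑ m : Fin (k+1), if (m:ℕ) = t then f (m:ℕ) else 0) = f t := by
  by_cases ht : t < k + 1
  · rw [show (∑ m : Fin (k+1), if (m:ℕ) = t then f (m:ℕ) else 0)
        = ∑ m : Fin (k+1), if m = (⟨t, ht⟩ : Fin (k+1)) then f (m:ℕ) else 0 from by
      apply Finset.sum_congr rfl; intro m _
      congr 1
      simp [Fin.ext_iff]]
    simp
  · rw [hf t (by omega)]
    apply Finset.sum_eq_zero
    intro m _
    rw [if_neg]
    omega
lemma NP (k : ℕ) :
    Nm k * Pm k = Pm k * Matrix.diagonal (fun j : Fin (k+1) => I * (2*((j:ℕ):ℂ) - k)) := by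
  ext ℓ j
  have hj : (j:ℕ) ≤ k := by omega
  rw [mul_apply, mul_diagonal]
  have hsplit : ∀ m : Fin (k+1), Nm k ℓ m * Pm k m j
      = (if (m:ℕ) = (ℓ:ℕ)+1 then (((ℓ:ℕ):ℂ)+1) * (pp k j).coeff (m:ℕ) else 0)
        + (if (ℓ:ℕ) = (m:ℕ)+1 then -(((k:ℂ) - (m:ℕ)) * (pp k j).coeff (m:ℕ)) else 0) := by
    intro m
    unfold Nm Pm
    rw [add_mul]
    congr 1 <;> [skip; skip] <;> (split_ifs with h <;> [push_cast; skip] <;> ring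
      )
  simp only [hsplit]
  rw [Finset.sum_add_distrib]
  rw [sum_single k ((ℓ:ℕ)+1) (fun m => (((ℓ:ℕ):ℂ)+1) * (pp k j).coeff m)
    (fun m hm => by simp only [coeff_gt k j m hj hm, mul_zero])]
  rcases hl : (ℓ:ℕ) with _ | n
  · have h0 : (∑ x : Fin (k+1), if 0 = (x:ℕ)+1 then -(((k:ℂ) - (x:ℕ)) * (pp k j).coeff (x:ℕ)) else 0) = 0 := by
      apply Finset.sum_eq_zero; intro m _; rw [if_neg]; omega
    rw [h0]
    unfold Pm
    rw [hl]
    push_cast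
    rw [rec0 k j hj]
    ring
  · have h1 : (∑ x : Fin (k+1), if n + 1 = (x:ℕ)+1 then -(((k:ℂ) - (x:ℕ)) * (pp k j).coeff (x:ℕ)) else 0)
        = -(((k:ℂ) - n) * (pp k j).coeff n) := by
      rw [show (∑ x : Fin (k+1), if n + 1 = (x:ℕ)+1 then -(((k:ℂ) - (x:ℕ)) * (pp k j).coeff (x:ℕ)) else 0)
          = ∑ x : Fin (k+1), if (x:ℕ) = n then -(((k:ℂ) - (x:ℕ)) * (pp k j).coeff (x:ℕ)) else 0 from by
        apply Finset.sum_congr rfl; intro m _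
        congr 1
        simp only [eq_iff_iff]
        omega]
      rw [sum_single k n (fun m => -(((k:ℂ) - m) * (pp k j).coeff m))
        (fun m hm => by simp only [coeff_gt k j m hj hm, mul_zero, neg_zero])]
    rw [h1]
    unfold Pm
    rw [hl]
    have := recn k j n hj
    push_cast
    linear_combination this


def Qm (k : ℕ) : Matrix (Fin (k+1)) (Fin (k+1)) ℂ := fun ℓ m => ((X - C I)^(m:ℕ)).coeff ℓ
def Rm (k : ℕ) : Matrix (Fin (k+1)) (Fin (k+1)) ℂ := fun m j =>
  if (j:ℕ) ≤ (m:ℕ) then ((k-(j:ℕ)).choose ((m:ℕ)-(j:ℕ)) : ℂ) * (2*I)^(k-(m:ℕ)) else 0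

lemma coeff_pow_gt (m ℓ : ℕ) (h : m < ℓ) : ((X - C I)^m).coeff ℓ = 0 := by
  apply coeff_eq_zero_of_natDegree_lt
  calc ((X - C I)^m).natDegree ≤ m * 1 := natDegree_pow_le_of_le _ (natDegree_X_sub_C_le I)
    _ < ℓ := by omega

lemma PQR (k : ℕ) : Pm k = Qm k * Rm k := by
  ext ℓ j
  rw [mul_apply]
  have hj : (j:ℕ) ≤ k := by omega
  have hexp : pp k (j:ℕ) = ∑ t ∈ Finset.range (k - (j:ℕ) + 1),
      (X - C I)^((j:ℕ)+t) * C ((2*I)^(k-(j:ℕ)-t)) * C (((k-(j:ℕ)).choose t : ℂ)) := by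
    unfold pp
    have hXI : (X + C I : Polynomial ℂ) = (X - C I) + C (2*I) := by
      rw [C_mul, map_ofNat]; ring
    rw [hXI, add_pow, Finset.mul_sum]
    apply Finset.sum_congr rfl
    intro t _
    rw [← C_pow, ← C_eq_natCast, pow_add]
    ring
  have hcoeff : Pm k ℓ j = ∑ t ∈ Finset.range (k - (j:ℕ) + 1),
      ((X - C I)^((j:ℕ)+t)).coeff ℓ * (2*I)^(k-(j:ℕ)-t) * (((k-(j:ℕ)).choose t : ℂ)) := by
    unfold Pm
    rw [hexp, finset_sum_coeff]
    apply Finset.sum_congr rfl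
    intro t _
    rw [coeff_mul_C, coeff_mul_C]
  have hmat : (∑ m : Fin (k+1), Qm k ℓ m * Rm k m j)
      = ∑ m ∈ Finset.range (k+1), ((X - C I)^m).coeff ℓ *
          (if (j:ℕ) ≤ m then ((k-(j:ℕ)).choose (m-(j:ℕ)) : ℂ) * (2*I)^(k-m) else 0) := by
    rw [← Fin.sum_univ_eq_sum_range]
    rfl
  have e : Finset.range (k + 1) = Finset.range ((j:ℕ) + (k - (j:ℕ) + 1)) := by
    congr 1; omega
  rw [e] at hmat
  rw [Finset.sum_range_add] at hmat
  rw [hmat, hcoeff]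
  have hz : (∑ m ∈ Finset.range (j:ℕ), ((X - C I)^m).coeff ℓ *
      (if (j:ℕ) ≤ m then ((k-(j:ℕ)).choose (m-(j:ℕ)) : ℂ) * (2*I)^(k-m) else 0)) = 0 := by
    apply Finset.sum_eq_zero
    intro m hm
    rw [if_neg (by simp at hm; omega), mul_zero]
  rw [hz, zero_add]
  apply Finset.sum_congr rfl
  intro t _
  rw [if_pos (by omega)]
  rw [show (j:ℕ) + t - (j:ℕ) = t from by omega, show k - ((j:ℕ) + t) = k - (j:ℕ) - t from by omega]
  ring

lemma detQ (k : ℕ) : (Qm k).det = 1 := by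
  rw [Matrix.det_of_upperTriangular (by
    intro i j h
    exact coeff_pow_gt _ _ h)]
  apply Finset.prod_eq_one
  intro m _
  have hQ : Qm k m m = ((X - C I)^(m:ℕ)).coeff (m:ℕ) := rfl
  rw [hQ]
  have hmon : ((X - C I)^(m:ℕ)).Monic := (monic_X_sub_C I).pow _
  have hdeg : ((X - C I)^(m:ℕ)).natDegree = (m:ℕ) := by
    rw [natDegree_pow, natDegree_X_sub_C, mul_one]
  nth_rewrite 2 [← hdeg]
  exact hmon.coeff_natDegree

lemma detR (k : ℕ) : (Rm k).det = ∏ j : Fin (k+1), (2*I)^(k-(j:ℕ)) := by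
  rw [Matrix.det_of_lowerTriangular (Rm k) (by
    intro i j h
    exact if_neg (by exact fun hc => absurd h (by simp; omega)))]
  apply Finset.prod_congr rfl
  intro j _
  show Rm k j j = _
  unfold Rm
  rw [if_pos le_rfl]
  simp

lemma detP_ne (k : ℕ) : (Pm k).det ≠ 0 := by
  rw [PQR, Matrix.det_mul, detQ, detR, one_mul]
  apply Finset.prod_ne_zero_iff.2
  intro j _
  exact pow_ne_zero _ (mul_ne_zero two_ne_zero I_ne_zero)


/-- the complexified shifted matrix -/
lemma Mc_eq (k : ℕ) (A B lam : ℝ) :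
    (algebraMap ℝ ℂ).mapMatrix (M0 k A B - lam • (1 : Matrix (Fin (k+1)) (Fin (k+1)) ℝ))
      = ((A : ℂ) - lam) • (1 : Matrix (Fin (k+1)) (Fin (k+1)) ℂ) + (B : ℂ) • Nm k := by
  ext i j
  simp only [RingHom.mapMatrix_apply, Matrix.map_apply, Matrix.sub_apply, Matrix.smul_apply,
    Matrix.one_apply, Matrix.add_apply, M0, Nm, smul_eq_mul, Fin.ext_iff, Complex.coe_algebraMap]
  split_ifs <;> first | omega | (push_cast; ring_nf)

lemma det_complex (k : ℕ) (A B lam : ℝ) :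
    ((algebraMap ℝ ℂ).mapMatrix (M0 k A B - lam • (1 : Matrix (Fin (k+1)) (Fin (k+1)) ℝ))).det
      = ∏ j : Fin (k+1), (((A:ℂ) - lam) + (B:ℂ) * (I * (2*((j:ℕ):ℂ) - k))) := by
  rw [Mc_eq]
  set x : ℂ := (A:ℂ) - lam with hx
  set Dg : Matrix (Fin (k+1)) (Fin (k+1)) ℂ :=
    Matrix.diagonal (fun j : Fin (k+1) => I * (2*((j:ℕ):ℂ) - k)) with hDg
  have key : (x • (1 : Matrix (Fin (k+1)) (Fin (k+1)) ℂ) + (B : ℂ) • Nm k) * Pm k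
      = Pm k * (x • (1 : Matrix (Fin (k+1)) (Fin (k+1)) ℂ) + (B : ℂ) • Dg) := by
    rw [Matrix.add_mul, Matrix.mul_add, Matrix.smul_mul, Matrix.smul_mul, Matrix.one_mul,
      Matrix.mul_smul, Matrix.mul_smul, Matrix.mul_one, NP]
  have hdet : (x • (1 : Matrix (Fin (k+1)) (Fin (k+1)) ℂ) + (B : ℂ) • Nm k).det
      = (x • (1 : Matrix (Fin (k+1)) (Fin (k+1)) ℂ) + (B : ℂ) • Dg).det := by
    have := congrArg Matrix.det key
    rw [Matrix.det_mul, Matrix.det_mul] at this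
    exact mul_right_cancel₀ (detP_ne k) (this.trans (mul_comm _ _))
  rw [hdet]
  have hdiag : x • (1 : Matrix (Fin (k+1)) (Fin (k+1)) ℂ) + (B : ℂ) • Dg
      = Matrix.diagonal (fun j : Fin (k+1) => x + (B:ℂ) * (I * (2*((j:ℕ):ℂ) - k))) := by
    ext i j
    simp only [Matrix.add_apply, Matrix.smul_apply, Matrix.one_apply, hDg,
      Matrix.diagonal_apply, smul_eq_mul]
    by_cases h : i = j
    · rw [if_pos h, if_pos h, if_pos h]; ring
    · rw [if_neg h, if_neg h, if_neg h]; ring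
  rw [hdiag, Matrix.det_diagonal]


lemma prod_pairing (k t : ℕ) (hk : k = 2*t+1) (x c : ℂ) :
    (∏ j : Fin (k+1), (x + c * (I * (2*((j:ℕ):ℂ) - k))))
      = ∏ m ∈ Finset.range (t+1), (x^2 + ((2*(m:ℂ)+1) * c)^2) := by
  set f : ℕ → ℂ := fun j => x + c * (I * (2*(j:ℂ) - k)) with hf
  set g : ℕ → ℂ := fun m => x^2 + ((2*(m:ℂ)+1) * c)^2 with hg
  have h0 : (∏ j : Fin (k+1), (x + c * (I * (2*((j:ℕ):ℂ) - k)))) = ∏ j ∈ Finset.range (k+1), f j :=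
    Fin.prod_univ_eq_prod_range f (k+1)
  rw [h0]
  have h1 : (∏ j ∈ Finset.range (k+1), f j) = ∏ j ∈ Finset.range ((t+1)+(t+1)), f j :=
    Finset.prod_congr (by rw [show k + 1 = (t+1)+(t+1) from by omega]) (fun _ _ => rfl)
  rw [h1, Finset.prod_range_add]
  have h2 : (∏ j ∈ Finset.range (t+1), f ((t+1)+j))
      = ∏ j ∈ Finset.range (t+1), f ((t+1)+(t-j)) := by
    rw [← Finset.prod_range_reflect (fun j => f ((t+1)+j)) (t+1)]
    apply Finset.prod_congr rfl
    intro j hj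
    congr 1
  rw [h2, ← Finset.prod_mul_distrib]
  have h3 : (∏ j ∈ Finset.range (t+1), (f j * f ((t+1)+(t-j))))
      = ∏ j ∈ Finset.range (t+1), g (t-j) := by
    apply Finset.prod_congr rfl
    intro j hj
    simp only [hf, hg]
    have hj' : j ≤ t := by simp at hj; omega
    have hc1 : ((t - j : ℕ):ℂ) = (t:ℂ) - j := by
      push_cast [Nat.cast_sub hj']; ring
    have hc2 : (((t+1)+(t-j) : ℕ):ℂ) = (t:ℂ) + 1 + ((t:ℂ) - j) := by
      push_cast [Nat.cast_sub hj']; ring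
    rw [hc2, hc1, hk]
    push_cast
    linear_combination (-(c^2 * (2*((t:ℂ)-j)+1)^2)) * Complex.I_sq
  rw [h3]
  rw [← Finset.prod_range_reflect (fun m => g m) (t+1)]
  apply Finset.prod_congr rfl
  intro j hj
  congr 1


end KacAux

/-- For odd `k`,
`det(M0 − λI) = ((A−λ)² + B²)((A−λ)² + (3B)²)⋯((A−λ)² + (kB)²)`. -/
theorem det_M0_sub_smul_one_odd (k : ℕ) (hk : Odd k) (A B : ℝ) (lam : ℝ) :
    (M0 k A B - lam • (1 : Matrix (Fin (k+1)) (Fin (k+1)) ℝ)).det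
      = ∏ m ∈ Finset.range ((k+1)/2), ((A - lam)^2 + ((2*(m:ℝ)+1) * B)^2) := by
  obtain ⟨t, ht⟩ := hk
  apply Complex.ofReal_injective
  have h1 : ((M0 k A B - lam • (1 : Matrix (Fin (k+1)) (Fin (k+1)) ℝ)).det : ℂ)
      = ((algebraMap ℝ ℂ).mapMatrix
          (M0 k A B - lam • (1 : Matrix (Fin (k+1)) (Fin (k+1)) ℝ))).det :=
    RingHom.map_det (algebraMap ℝ ℂ) _
  rw [h1, KacAux.det_complex, KacAux.prod_pairing k t ht]
  rw [show (k+1)/2 = t + 1 from by omega]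
  push_cast
  rfl

end
end

section
/- Let k ∈ N and A, B ∈ R, and let M0 be the (k+1)×(k+1) tridiagonal matrix with diagonal entries A, superdiagonal entries (ℓ+1)B, and subdiagonal entries −(k−ℓ)B (0-indexed). If k is even, then det(M0 − λI) = (A−λ)·((A−λ)² + (2B)²)((A−λ)² + (4B)²)···((A−λ)² + (kB)²). -/
/-!
`M0 k A B = A • 1 + B • K`, where the Sylvester–Kac matrix `K` is the matrix, in the basis
`1, X, …, X^k`, of the operator `p ↦ (1 + X²) p' - k X p` on polynomials of degree `≤ k`.
Since `1 + X² = (1 + iX)(1 - iX)`, the polynomials `(1 + iX)^(k-j) (1 - iX)^j` are eigenvectors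
of this operator, with the `k + 1` distinct eigenvalues `i (k - 2j)`. Hence
`det (M0 - λ) = ∏ⱼ (A - λ + i B (k - 2j))`, and for even `k` the factors `j` and `k - j` pair up
to `(A - λ)² + ((k - 2j) B)²`, leaving the factor `A - λ` from `j = k/2`.
-/

noncomputable section

open Polynomial

section General

variable {R : Type*} [CommRing R]

lemma mul_derivative_pow (p : R[X]) (n : ℕ) :
    p * derivative (p ^ n) = C (n : R) * derivative p * p ^ n := by
  rcases n with _ | n
  · simp
  · rw [derivative_pow_succ]
    push_cast
    ring

lemma C_mul_X_pow_mem_degreeLT {m n : ℕ} (h : m < n) (c : R) : C c * X ^ m ∈ degreeLT R n :=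
  mem_degreeLT.2 ((degree_C_mul_X_pow_le m c).trans_lt (by exact_mod_cast h))

lemma prod_range_add_mul_two_mul_sub (n : ℕ) (x y : R) :
    ∏ j ∈ Finset.range (2 * n + 1), (x + (2 * n - 2 * j) * y)
      = x * ∏ m ∈ Finset.range n, (x ^ 2 - (2 * (m + 1) * y) ^ 2) := by
  induction n with
  | zero => simp
  | succ n ih =>
    have hshift : ∀ j ∈ Finset.range (2 * n + 1),
        x + (2 * ((n + 1 : ℕ) : R) - 2 * ((j + 1 : ℕ) : R)) * y = x + (2 * n - 2 * j) * y :=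
      fun j _ => by push_cast; ring
    rw [show 2 * (n + 1) + 1 = 2 * n + 1 + 1 + 1 by ring, Finset.prod_range_succ _ (2 * n + 1 + 1),
      Finset.prod_range_succ', Finset.prod_congr rfl hshift, ih, Finset.prod_range_succ _ n]
    push_cast
    ring

end General

theorem LinearMap.charpoly_eq_prod_X_sub_C_of_hasEigenvalue {K V ι : Type*} [Field K]
    [AddCommGroup V] [Module K V] [FiniteDimensional K V] [Fintype ι] {f : Module.End K V}
    {μ : ι → K} (hμ : Function.Injective μ) (hcard : Fintype.card ι = Module.finrank K V)
    (h : ∀ i, f.HasEigenvalue (μ i)) :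
    f.charpoly = ∏ i, (X - C (μ i)) := by
  refine eq_of_monic_of_dvd_of_natDegree_le (monic_prod_of_monic _ _ fun i _ => monic_X_sub_C _)
    f.charpoly_monic ?_ ?_
  · exact Fintype.prod_dvd_of_coprime (pairwise_coprime_X_sub_C hμ)
      fun i => dvd_iff_isRoot.2 ((Module.End.hasEigenvalue_iff_isRoot_charpoly f _).1 (h i))
  · rw [f.charpoly_natDegree, natDegree_finsetProd_X_sub_C_eq_card, Finset.card_univ, hcard]

theorem Matrix.det_smul_one_add_smul_of_charpoly_eq_prod {n ι K : Type*} [Fintype n]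
    [DecidableEq n] [Field K] {M : Matrix n n K} {s : Finset ι} {μ : ι → K}
    (h : M.charpoly = ∏ i ∈ s, (X - C (μ i))) (c b : K) :
    (c • 1 + b • M).det = ∏ i ∈ s, (c + b * μ i) := by
  have hcard : Fintype.card n = s.card := by
    rw [← M.charpoly_natDegree_eq_dim, h, natDegree_finsetProd_X_sub_C_eq_card]
  rcases eq_or_ne b 0 with rfl | hb
  · simp [hcard]
  · have hscale : c • 1 + b • M = (-b) • (Matrix.scalar n (-c / b) - M) := by
      rw [Matrix.scalar_apply, ← Matrix.smul_one_eq_diagonal, smul_sub, smul_smul]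
      field_simp
      module
    rw [hscale, Matrix.det_smul, ← Matrix.eval_charpoly, h, eval_prod, hcard,
      ← Finset.prod_const, ← Finset.prod_mul_distrib]
    refine Finset.prod_congr rfl fun i _ => ?_
    simp only [eval_sub, eval_X, eval_C]
    field_simp
    ring

section Kac

variable {R : Type*} [CommRing R]

def kacMatrix (k : ℕ) : Matrix (Fin (k+1)) (Fin (k+1)) R :=
  Matrix.of fun i j =>
    if (j : ℕ) = i + 1 then ((i : ℕ) + 1 : R)
    else if (i : ℕ) = j + 1 then -((k : R) - (j : ℕ))
    else 0

lemma M0_eq_smul_one_add_smul_kacMatrix (k : ℕ) (A B : ℝ) :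
    M0 k A B = A • 1 + B • kacMatrix k := by
  ext i j
  simp only [M0, kacMatrix, Matrix.add_apply, Matrix.smul_apply, Matrix.one_apply, Fin.ext_iff,
    Matrix.of_apply, smul_eq_mul]
  split_ifs <;> first | omega | ring

lemma kacMatrix_map {S : Type*} [CommRing S] (f : R →+* S) (k : ℕ) :
    (kacMatrix k).map f = kacMatrix k := by
  ext i j
  simp only [kacMatrix, Matrix.map_apply, Matrix.of_apply]
  split_ifs <;> simp

def kacOperator (k : ℕ) : R[X] →ₗ[R] R[X] :=
  LinearMap.mulLeft R (1 + X ^ 2) ∘ₗ derivative - LinearMap.mulLeft R (C (k : R) * X)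

lemma kacOperator_apply (k : ℕ) (p : R[X]) :
    kacOperator k p = (1 + X ^ 2) * derivative p - C (k : R) * X * p :=
  rfl

lemma kacOperator_X_pow (k j : ℕ) :
    kacOperator k (X ^ j : R[X]) = C (j : R) * X ^ (j - 1) - C ((k : R) - j) * X ^ (j + 1) := by
  rw [kacOperator_apply, derivative_X_pow]
  rcases j with _ | j
  · simp
  · simp only [map_sub, Nat.add_sub_cancel, Nat.cast_succ]
    ring

lemma kacOperator_X_pow_mem_degreeLT {k j : ℕ} (hj : j < k + 1) :
    kacOperator k (X ^ j : R[X]) ∈ degreeLT R (k + 1) := by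
  rw [kacOperator_X_pow]
  refine Submodule.sub_mem _ (C_mul_X_pow_mem_degreeLT (by omega) _) ?_
  rcases (show j < k ∨ j = k by omega) with h | rfl
  · exact C_mul_X_pow_mem_degreeLT (by omega) _
  · simp

lemma kacOperator_mem_degreeLT {k : ℕ} {p : R[X]} (hp : p ∈ degreeLT R (k + 1)) :
    kacOperator k p ∈ degreeLT R (k + 1) := by
  classical
  suffices degreeLT R (k + 1) ≤ (degreeLT R (k + 1)).comap (kacOperator k) from this hp
  conv_lhs => rw [degreeLT_eq_span_X_pow]
  rw [Submodule.span_le, Finset.coe_image]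
  rintro _ ⟨j, hj, rfl⟩
  exact kacOperator_X_pow_mem_degreeLT (Finset.mem_range.1 hj)

def kacEnd (k : ℕ) : Module.End R (degreeLT R (k + 1)) :=
  (kacOperator k).restrict fun _ => kacOperator_mem_degreeLT

lemma toMatrix_kacEnd (k : ℕ) :
    LinearMap.toMatrix (degreeLT.basis R (k + 1)) (degreeLT.basis R (k + 1)) (kacEnd k)
      = kacMatrix k := by
  ext i j
  rw [LinearMap.toMatrix_apply, degreeLT.basis_repr, kacEnd, LinearMap.coe_restrict_apply,
    degreeLT.basis_val, kacOperator_X_pow, coeff_sub, coeff_C_mul_X_pow, coeff_C_mul_X_pow]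
  simp only [kacMatrix, Matrix.of_apply]
  split_ifs <;> try omega
  · push_cast [‹(j : ℕ) = i + 1›]
    ring
  · simp [show (j : ℕ) = 0 by omega]
  · ring
  · ring

end Kac

section Eigenvalues

open Complex

lemma kacOperator_eigenvector (a b : ℕ) :
    kacOperator (a + b) ((1 + C I * X) ^ a * (1 - C I * X) ^ b)
      = (I * (a - b)) • ((1 + C I * X) ^ a * (1 - C I * X) ^ b) := by
  set u : ℂ[X] := 1 + C I * X
  set w : ℂ[X] := 1 - C I * X
  have hI : (C I * C I : ℂ[X]) = -1 := by rw [← C_mul, I_mul_I, C_neg, C_1]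
  have hu : u * derivative (u ^ a) = a * C I * u ^ a := by
    simpa [u] using mul_derivative_pow u a
  have hw : w * derivative (w ^ b) = -(b * C I * w ^ b) := by
    simpa [w] using mul_derivative_pow w b
  rw [kacOperator_apply, derivative_mul, smul_eq_C_mul]
  simp only [map_add, map_sub, map_mul, map_natCast, Nat.cast_add]
  linear_combination w * w ^ b * hu + u * u ^ a * hw
    - (a + b : ℂ[X]) * X * u ^ a * w ^ b * hI
    + X ^ 2 * (derivative (u ^ a) * w ^ b + u ^ a * derivative (w ^ b)) * hI

lemma hasEigenvalue_kacEnd {k j : ℕ} (hj : j ≤ k) :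
    (kacEnd k : Module.End ℂ _).HasEigenvalue (I * (k - 2 * j)) := by
  have heigen := kacOperator_eigenvector (k - j) j
  rw [Nat.sub_add_cancel hj] at heigen
  have hdeg : ((1 + C I * X) ^ (k - j) * (1 - C I * X) ^ j : ℂ[X]).natDegree ≤ k := by
    compute_degree
    omega
  set P : ℂ[X] := (1 + C I * X) ^ (k - j) * (1 - C I * X) ^ j
  have hP : P ∈ degreeLT ℂ (k + 1) :=
    mem_degreeLT.2 (degree_le_natDegree.trans_lt (by exact_mod_cast Nat.lt_succ_of_le hdeg))
  refine Module.End.hasEigenvalue_of_hasEigenvector (x := ⟨P, hP⟩) ⟨?_, ?_⟩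
  · rw [Module.End.mem_eigenspace_iff]
    ext1
    simp only [kacEnd, LinearMap.coe_restrict_apply, heigen, SetLike.val_smul]
    congr 1
    push_cast [hj]
    ring
  · intro h
    have := congrArg (fun q : degreeLT ℂ (k + 1) => (q : ℂ[X]).eval 0) h
    simp [P] at this

lemma charpoly_kacMatrix (k : ℕ) :
    (kacMatrix k : Matrix _ _ ℂ).charpoly
      = ∏ j ∈ Finset.range (k + 1), (X - C (I * (k - 2 * j))) := by
  rw [← toMatrix_kacEnd, LinearMap.charpoly_toMatrix, ← Fin.prod_univ_eq_prod_range]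
  refine LinearMap.charpoly_eq_prod_X_sub_C_of_hasEigenvalue (fun i j hij => ?_) ?_
    fun j => hasEigenvalue_kacEnd (Nat.lt_succ_iff.1 j.isLt)
  · have := mul_left_cancel₀ I_ne_zero hij
    ext
    exact_mod_cast (by linear_combination (-1/2 : ℂ) * this : ((i : ℕ) : ℂ) = j)
  · rw [Module.finrank_eq_card_basis (degreeLT.basis ℂ (k + 1))]

end Eigenvalues

/-- For even `k`,
`det(M0 − λI) = (A−λ)·((A−λ)² + (2B)²)((A−λ)² + (4B)²)⋯((A−λ)² + (kB)²)`. -/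
theorem det_M0_sub_smul_one_even (k : ℕ) (hk : Even k) (A B : ℝ) (lam : ℝ) :
    (M0 k A B - lam • (1 : Matrix (Fin (k+1)) (Fin (k+1)) ℝ)).det
      = (A - lam) * ∏ m ∈ Finset.range (k/2), ((A - lam)^2 + ((2*((m:ℝ)+1)) * B)^2) := by
  obtain ⟨n, rfl⟩ := hk.two_dvd
  have hsplit : M0 (2 * n) A B - lam • 1 = (A - lam) • 1 + B • kacMatrix (2 * n) := by
    rw [M0_eq_smul_one_add_smul_kacMatrix]
    module
  apply Complex.ofReal_injective
  rw [← Complex.ofRealHom_eq_coe, RingHom.map_det, hsplit, RingHom.mapMatrix_apply,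
    Matrix.map_add _ (map_add _), Matrix.map_smul' _ _ _ (map_mul _),
    Matrix.map_smul' _ _ _ (map_mul _), Matrix.map_one _ (map_zero _) (map_one _), kacMatrix_map,
    Matrix.det_smul_one_add_smul_of_charpoly_eq_prod (charpoly_kacMatrix _)]
  have hfactor : ∀ j ∈ Finset.range (2 * n + 1),
      Complex.ofRealHom (A - lam) + Complex.ofRealHom B * (Complex.I * ((2 * n : ℕ) - 2 * j))
        = ((A - lam : ℝ) : ℂ) + (2 * n - 2 * j) * (B * Complex.I) :=
    fun j _ => by simp only [Complex.ofRealHom_eq_coe]; push_cast; ring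
  rw [Finset.prod_congr rfl hfactor, prod_range_add_mul_two_mul_sub,
    Nat.mul_div_cancel_left n two_pos]
  push_cast
  congr 1
  refine Finset.prod_congr rfl fun m _ => ?_
  linear_combination (-(2 * (m + 1) * B) ^ 2 : ℂ) * Complex.I_sq

end
end

section
/- Let k be odd, A, B ∈ R with B ≠ 0, and M0 the (k+1)×(k+1) tridiagonal real matrix with diagonal A, superdiagonal (ℓ+1)B, subdiagonal −(k−ℓ)B. Then M0 has no real eigenvalue, hence is invertible whenever A is replaced by A−λ for any real λ; in particular M0 itself is invertible. -/
noncomputable section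

namespace M0aux
open Matrix

lemma mulVec_apply (k : ℕ) (A B : ℝ) (x : Fin (k+1) → ℝ) (i : Fin (k+1)) :
    (M0 k A B).mulVec x i =
      A * x i
      + (if h : (i:ℕ) < k then (((i:ℕ):ℝ)+1) * B * x ⟨(i:ℕ)+1, by omega⟩ else 0)
      + (if h : 0 < (i:ℕ) then -((k:ℝ) - (((i:ℕ) - 1 : ℕ):ℝ)) * B * x ⟨(i:ℕ)-1, by omega⟩ else 0) := by
  classical
  have hsplit : ∀ j : Fin (k+1), M0 k A B i j * x j
      = (if j = i then A * x i else 0)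
        + (if (j:ℕ) = (i:ℕ)+1 then (((i:ℕ):ℝ)+1) * B * x j else 0)
        + (if (j:ℕ)+1 = (i:ℕ) then -((k:ℝ) - ((j:ℕ):ℝ)) * B * x j else 0) := by
    intro j
    simp only [M0, Fin.ext_iff]
    split_ifs <;> first
      | ring1
      | (exfalso; omega)
      | (have hji : j = i := Fin.eq_of_val_eq (by omega); subst hji; ring1)
  show (∑ j, M0 k A B i j * x j) = _
  rw [Finset.sum_congr rfl (fun j _ => hsplit j)]
  rw [Finset.sum_add_distrib, Finset.sum_add_distrib]
  congr 1
  · congr 1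
    · simp
    · by_cases h : (i:ℕ) < k
      · rw [dif_pos h]
        rw [Finset.sum_eq_single (⟨(i:ℕ)+1, by omega⟩ : Fin (k+1))]
        · simp
        · intro j _ hj
          rw [if_neg]
          intro hc
          exact hj (by simp [Fin.ext_iff, hc])
        · simp
      · rw [dif_neg h]
        apply Finset.sum_eq_zero
        intro j _
        rw [if_neg]
        omega
  · by_cases h : 0 < (i:ℕ)
    · rw [dif_pos h]
      rw [Finset.sum_eq_single (⟨(i:ℕ)-1, by omega⟩ : Fin (k+1))]
      · rw [if_pos (show ((⟨(i:ℕ)-1, by omega⟩ : Fin (k+1)) : ℕ) + 1 = (i:ℕ) by simp; omega)]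
      · intro j _ hj
        rw [if_neg]
        intro hc
        exact hj (by simp [Fin.ext_iff]; omega)
      · simp
    · rw [dif_neg h]
      apply Finset.sum_eq_zero
      intro j _
      rw [if_neg]
      omega


def w (k : ℕ) (i : Fin (k+1)) : ℝ := ((Nat.factorial (i:ℕ)) * (Nat.factorial (k - (i:ℕ))) : ℕ)

lemma w_pos (k : ℕ) (i : Fin (k+1)) : 0 < w k i := by
  have := Nat.factorial_pos (i:ℕ)
  have := Nat.factorial_pos (k - (i:ℕ))
  unfold w
  positivity

lemma wkey (k i : ℕ) (h : i + 1 ≤ k) :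
    (Nat.factorial i * Nat.factorial (k - i)) * (i+1)
      = (Nat.factorial (i+1) * Nat.factorial (k - (i+1))) * (k - i) := by
  set m := k - (i+1) with hm
  have h1 : k - i = m + 1 := by omega
  rw [h1, Nat.factorial_succ, Nat.factorial_succ]
  ring

lemma symm_part (k : ℕ) (A B : ℝ) :
    Matrix.diagonal (w k) * M0 k A B + (Matrix.diagonal (w k) * M0 k A B)ᵀ
      = Matrix.diagonal (fun i => 2 * A * w k i) := by
  ext i j
  rw [Matrix.add_apply, Matrix.transpose_apply, Matrix.diagonal_mul, Matrix.diagonal_mul]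
  by_cases hd : (i:ℕ) = (j:ℕ)
  · have hij : i = j := Fin.eq_of_val_eq hd
    subst hij
    rw [Matrix.diagonal_apply_eq]
    simp [M0]
    ring
  · have hij : i ≠ j := fun hc => hd (by rw [hc])
    rw [Matrix.diagonal_apply_ne _ hij]
    by_cases h1 : (j:ℕ) = (i:ℕ) + 1
    · -- superdiagonal: w i * ((i+1)B) + w j * (-(k - i)B) = 0
      have hik : (i:ℕ) + 1 ≤ k := by omega
      have hMij : M0 k A B i j = (((i:ℕ):ℝ) + 1) * B := by
        simp [M0, hd, h1]
      have hMji : M0 k A B j i = -((k:ℝ) - ((i:ℕ):ℝ)) * B := by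
        simp only [M0]
        rw [if_neg (by omega), if_neg (by omega), if_pos (by omega)]
      rw [hMij, hMji]
      unfold w
      have hcast : ((k:ℝ) - ((i:ℕ):ℝ)) = ((k - (i:ℕ) : ℕ) : ℝ) := by
        rw [Nat.cast_sub (by omega)]
      rw [hcast]
      have hw := wkey k (i:ℕ) hik
      have hw' : ((Nat.factorial (i:ℕ) * Nat.factorial (k - (i:ℕ))) * ((i:ℕ)+1) : ℝ)
          = ((Nat.factorial ((i:ℕ)+1) * Nat.factorial (k - ((i:ℕ)+1))) * (k - (i:ℕ) : ℕ) : ℝ) := by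
        exact_mod_cast congrArg (Nat.cast : ℕ → ℝ) hw
      rw [h1]
      push_cast at hw' ⊢
      linear_combination B * hw'
    · by_cases h2 : (i:ℕ) = (j:ℕ) + 1
      · have hjk : (j:ℕ) + 1 ≤ k := by omega
        have hMij : M0 k A B i j = -((k:ℝ) - ((j:ℕ):ℝ)) * B := by
          simp only [M0]
          rw [if_neg (by omega), if_neg (by omega), if_pos (by omega)]
        have hMji : M0 k A B j i = (((j:ℕ):ℝ) + 1) * B := by
          simp only [M0]
          rw [if_neg (by omega), if_pos (by omega)]
        rw [hMij, hMji]
        unfold w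
        have hcast : ((k:ℝ) - ((j:ℕ):ℝ)) = ((k - (j:ℕ) : ℕ) : ℝ) := by
          rw [Nat.cast_sub (by omega)]
        rw [hcast]
        have hw := wkey k (j:ℕ) hjk
        have hw' : ((Nat.factorial (j:ℕ) * Nat.factorial (k - (j:ℕ))) * ((j:ℕ)+1) : ℝ)
            = ((Nat.factorial ((j:ℕ)+1) * Nat.factorial (k - ((j:ℕ)+1))) * (k - (j:ℕ) : ℕ) : ℝ) := by
          exact_mod_cast congrArg (Nat.cast : ℕ → ℝ) hw
        rw [h2]
        push_cast at hw' ⊢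
        linear_combination B * hw'
      · have hMij : M0 k A B i j = 0 := by
          simp only [M0]
          rw [if_neg (by omega), if_neg (by omega), if_neg (by omega)]
        have hMji : M0 k A B j i = 0 := by
          simp only [M0]
          rw [if_neg (by omega), if_neg (by omega), if_neg (by omega)]
        rw [hMij, hMji]
        ring


lemma mulVec_eq_zero (k : ℕ) (hk : Odd k) (A B : ℝ) (hB : B ≠ 0)
    (x : Fin (k+1) → ℝ) (hx : (M0 k A B).mulVec x = 0) : x = 0 := by
  classical
  set N := Matrix.diagonal (w k) * M0 k A B with hNdef
  have hN : N.mulVec x = 0 := by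
    rw [hNdef, ← Matrix.mulVec_mulVec, hx, Matrix.mulVec_zero]
  have hq : ∑ i, x i * (2 * A * w k i * x i) = 0 := by
    have h1 : x ⬝ᵥ ((N + Nᵀ).mulVec x) = 0 := by
      rw [Matrix.add_mulVec, hN, Matrix.mulVec_transpose, zero_add,
        dotProduct_comm, ← Matrix.dotProduct_mulVec, hN, dotProduct_zero]
    rw [hNdef, symm_part] at h1
    simpa [Matrix.mulVec_diagonal, dotProduct] using h1
  by_cases hA : A = 0
  · -- recurrence argument
    subst hA
    obtain ⟨t, hkt⟩ := hk
    set y : ℕ → ℝ := fun n => if h : n ≤ k then x ⟨n, by omega⟩ else 0 with hy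
    have hyx : ∀ (n : ℕ) (hn : n ≤ k), y n = x ⟨n, by omega⟩ := by
      intro n hn; simp only [hy]; rw [dif_pos hn]
    have hzero1 : y 1 = 0 := by
      have h := congrFun hx (⟨0, by omega⟩ : Fin (k+1))
      rw [mulVec_apply] at h
      rw [dif_pos (show (((⟨0, by omega⟩ : Fin (k+1)) : ℕ)) < k by simp; omega),
        dif_neg (by simp)] at h
      simp only [Pi.zero_apply] at h
      rw [hyx 1 (by omega)]
      have : (0:ℝ) * x ⟨0, by omega⟩ + ((((⟨0, by omega⟩ : Fin (k+1)):ℕ):ℝ)+1) * B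
          * x ⟨((⟨0, by omega⟩ : Fin (k+1)):ℕ)+1, by simp; omega⟩ + 0 = 0 := h
      simp at this
      rcases this with h' | h'
      · exact absurd h' hB
      · exact h'
    have hstep : ∀ n : ℕ, n + 1 ≤ k →
        ((n:ℝ)+2) * B * y (n+2) = ((k:ℝ) - (n:ℝ)) * B * y n := by
      intro n hn
      have h := congrFun hx (⟨n+1, by omega⟩ : Fin (k+1))
      rw [mulVec_apply] at h
      simp only [Pi.zero_apply, zero_mul, zero_add] at h
      by_cases hlt : n + 1 < k
      · rw [dif_pos (show (((⟨n+1, by omega⟩ : Fin (k+1)) : ℕ)) < k from hlt),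
          dif_pos (show 0 < ((⟨n+1, by omega⟩ : Fin (k+1)) : ℕ) by simp)] at h
        rw [hyx (n+2) (by omega), hyx n (by omega)]
        push_cast at h
        try simp only [Nat.add_sub_cancel] at h
        linarith [h]
      ·  -- n + 1 = k
        have hnk : n + 1 = k := by omega
        rw [dif_neg (show ¬(((⟨n+1, by omega⟩ : Fin (k+1)) : ℕ)) < k by simp; omega),
          dif_pos (show 0 < ((⟨n+1, by omega⟩ : Fin (k+1)) : ℕ) by simp)] at h
        have hy2 : y (n+2) = 0 := by
          simp only [hy]; rw [dif_neg (by omega)]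
        rw [hy2, hyx n (by omega)]
        try simp only [Nat.add_sub_cancel] at h
        linarith [h]
    have heven : ∀ m : ℕ, 2*m ≤ k → ∃ c : ℝ, 0 < c ∧ y (2*m) = c * y 0 := by
      intro m
      induction m with
      | zero => exact fun _ => ⟨1, one_pos, (one_mul _).symm⟩
      | succ m ih =>
        intro h2
        obtain ⟨c, hc, hyc⟩ := ih (by omega)
        have hs := hstep (2*m) (by omega)
        have hkm : (0:ℝ) < (k:ℝ) - (2*m:ℕ) := by
          have : (2*m:ℕ) < k := by omega
          have := (Nat.cast_lt (α := ℝ)).2 this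
          push_cast at this ⊢
          linarith
        have hd : ((2*m:ℕ):ℝ) + 2 ≠ 0 := by positivity
        refine ⟨(((k:ℝ) - (2*m:ℕ)) / (((2*m:ℕ):ℝ)+2)) * c, ?_, ?_⟩
        · have : (0:ℝ) < ((2*m:ℕ):ℝ) + 2 := by positivity
          positivity
        · have h2m : 2*(m+1) = 2*m+2 := by ring
          rw [h2m]
          have hs' : ((2*(m:ℝ)+2) * y (2*m+2)) * B = (((k:ℝ) - 2*(m:ℝ)) * y (2*m)) * B := by
            push_cast at hs
            linear_combination hs
          have hs'' := mul_right_cancel₀ hB hs'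
          have : y (2*m+2) = (((k:ℝ) - (2*m:ℕ)) / (((2*m:ℕ):ℝ)+2)) * y (2*m) := by
            push_cast
            field_simp
            linear_combination hs''
          rw [this, hyc]
          push_cast
          ring
    have hy0 : y 0 = 0 := by
      have hs := hstep (2*t) (by omega)
      have hy2 : y (2*t+2) = 0 := by
        simp only [hy]; rw [dif_neg (by omega)]
      rw [hy2] at hs
      push_cast at hs
      have hco : (k:ℝ) = 2*(t:ℝ)+1 := by exact_mod_cast congrArg (Nat.cast : ℕ → ℝ) hkt
      have hb : B * y (2*t) = 0 := by
        rw [hco] at hs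
        linear_combination -hs
      have hy2t : y (2*t) = 0 := (mul_eq_zero.1 hb).resolve_left hB
      obtain ⟨c, hc, hyc⟩ := heven t (by omega)
      rw [hy2t] at hyc
      have := hyc.symm
      rcases mul_eq_zero.1 this with h' | h'
      · exact absurd h' (ne_of_gt hc)
      · exact h'
    have hall : ∀ n, y n = 0 := by
      intro n
      induction n using Nat.strong_induction_on with
      | _ n ih =>
        match n with
        | 0 => exact hy0
        | 1 => exact hzero1
        | (m+2) =>
          by_cases h : m + 2 ≤ k
          · have hs := hstep m (by omega)
            rw [ih m (by omega)] at hs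
            have hd : ((m:ℝ)+2) ≠ 0 := by positivity
            have : ((m:ℝ)+2) * B * y (m+2) = 0 := by rw [hs]; ring
            rcases mul_eq_zero.1 this with h' | h'
            · rcases mul_eq_zero.1 h' with h'' | h''
              · exact absurd h'' hd
              · exact absurd h'' hB
            · exact h'
          · simp only [hy]; rw [dif_neg (by omega)]
    funext i
    have := hall (i:ℕ)
    rw [hyx (i:ℕ) (by omega)] at this
    simpa using this
  · -- A ≠ 0
    have hsum : ∑ i, w k i * (x i)^2 = 0 := by
      have h2A : (2*A) ≠ 0 := by simp [hA]
      have : (2*A) * ∑ i, w k i * (x i)^2 = 0 := by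
        rw [Finset.mul_sum, ← hq]
        apply Finset.sum_congr rfl
        intro i _
        ring
      exact (mul_eq_zero.1 this).resolve_left h2A
    funext i
    have hnn : ∀ i ∈ Finset.univ, (0:ℝ) ≤ w k i * (x i)^2 := by
      intro i _
      have := w_pos k i
      positivity
    have := (Finset.sum_eq_zero_iff_of_nonneg hnn).1 hsum i (Finset.mem_univ i)
    have hwx : (x i)^2 = 0 := by
      rcases mul_eq_zero.1 this with h' | h'
      · exact absurd h' (ne_of_gt (w_pos k i))
      · exact h'
    simpa using pow_eq_zero_iff (n := 2) (by omega) |>.1 hwx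


lemma shift (k : ℕ) (A B lam : ℝ) :
    M0 k A B - lam • (1 : Matrix (Fin (k+1)) (Fin (k+1)) ℝ) = M0 k (A - lam) B := by
  ext i j
  rw [Matrix.sub_apply, Matrix.smul_apply, Matrix.one_apply]
  by_cases hd : (i:ℕ) = (j:ℕ)
  · have hij : i = j := Fin.eq_of_val_eq hd
    subst hij
    simp [M0]
  · have hij : i ≠ j := fun hc => hd (by rw [hc])
    rw [if_neg hij]
    simp only [M0, if_neg hd]
    rw [smul_zero]
    split_ifs <;> ring1

lemma isUnit_M0 (k : ℕ) (hk : Odd k) (A B : ℝ) (hB : B ≠ 0) : IsUnit (M0 k A B) := by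
  rw [Matrix.isUnit_iff_isUnit_det, isUnit_iff_ne_zero]
  intro hdet
  obtain ⟨v, hv0, hv⟩ := Matrix.exists_mulVec_eq_zero_iff.2 hdet
  exact hv0 (mulVec_eq_zero k hk A B hB v hv)

end M0aux

/-- For odd `k` and `B ≠ 0`, the matrix `M0` has no real eigenvalue; hence `M0 − λI`
is invertible for every real `λ`, and in particular `M0` itself is invertible. -/
theorem M0_no_real_eigenvalue_of_odd (k : ℕ) (hk : Odd k) (A B : ℝ) (hB : B ≠ 0) :
    (∀ lam : ℝ, ¬ Module.End.HasEigenvalue (Matrix.toLin' (M0 k A B)) lam) ∧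
    (∀ lam : ℝ, IsUnit (M0 k A B - lam • (1 : Matrix (Fin (k+1)) (Fin (k+1)) ℝ))) ∧
    IsUnit (M0 k A B) := by
  refine ⟨?_, ?_, M0aux.isUnit_M0 k hk A B hB⟩
  · intro lam hlam
    obtain ⟨v, hv⟩ := hlam.exists_hasEigenvector
    have hv1 : (M0 k A B).mulVec v = lam • v := by
      have := hv.apply_eq_smul
      rwa [Matrix.toLin'_apply] at this
    have hzero : (M0 k (A - lam) B).mulVec v = 0 := by
      rw [← M0aux.shift, Matrix.sub_mulVec, hv1, Matrix.smul_mulVec,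
        Matrix.one_mulVec, sub_self]
    exact hv.right (M0aux.mulVec_eq_zero k hk (A - lam) B hB v hzero)
  · intro lam
    rw [M0aux.shift]
    exact M0aux.isUnit_M0 k hk (A - lam) B hB


end
end

section
/- Let k be even, A, B ∈ R with B ≠ 0, and M0 the (k+1)×(k+1) tridiagonal real matrix with diagonal A, superdiagonal (ℓ+1)B, subdiagonal −(k−ℓ)B. Then λ = A is the unique real eigenvalue of M0, and its eigenspace is one-dimensional. -/
noncomputable section

/-!
Write `M0 k A B - A • 1 = B • N` with `N = M0 k 0 1`. The weights `w ℓ = ℓ! (k - ℓ)!` satisfy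
`w ℓ * (ℓ + 1) = w (ℓ + 1) * (k - ℓ)`, so `diagonal w * N` is skew-symmetric. For an eigenvector
`v` with eigenvalue `μ` this gives `(μ - A) * vᵀ (diagonal w) v = B * vᵀ (diagonal w * N) v = 0`,
hence `μ = A`. For even `k` the skew matrix `diagonal w * N` has odd size, so `det N = 0` and `A`
is an eigenvalue. Its eigenspace is `ker N`, and as `N` is lower Hessenberg with nonzero
superdiagonal, a vector of `ker N` is determined by its first coordinate.
-/

open Matrix Module

theorem Matrix.dotProduct_mulVec_self_eq_zero_of_transpose_eq_neg {n R : Type*} [Fintype n]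
    [CommRing R] [IsAddTorsionFree R] {S : Matrix n n R} (hS : Sᵀ = -S) (v : n → R) :
    v ⬝ᵥ (S *ᵥ v) = 0 := by
  rw [← neg_eq_self]
  calc -(v ⬝ᵥ (S *ᵥ v)) = v ⬝ᵥ (Sᵀ *ᵥ v) := by rw [hS, neg_mulVec, dotProduct_neg]
    _ = v ⬝ᵥ (S *ᵥ v) := by rw [mulVec_transpose, dotProduct_comm, dotProduct_mulVec]

theorem Matrix.det_eq_zero_of_transpose_eq_neg {n R : Type*} [Fintype n] [DecidableEq n]
    [CommRing R] [IsAddTorsionFree R] {S : Matrix n n R} (hS : Sᵀ = -S)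
    (hn : Odd (Fintype.card n)) : S.det = 0 := by
  rw [← neg_eq_self]
  calc -S.det = (-S).det := by rw [det_neg, hn.neg_one_pow, neg_one_mul]
    _ = S.det := by rw [← hS, det_transpose]

theorem Matrix.eq_of_hasEigenvalue_toLin'_of_posDef_mul_sub_skew {n : Type*} [Fintype n]
    [DecidableEq n] {P M : Matrix n n ℝ} {c μ : ℝ} (hP : P.PosDef)
    (hPM : (P * (M - c • 1))ᵀ = -(P * (M - c • 1)))
    (hμ : End.HasEigenvalue (toLin' M) μ) : μ = c := by
  obtain ⟨v, hv⟩ := hμ.exists_hasEigenvector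
  have hMv : M *ᵥ v = μ • v := by simpa using End.mem_eigenspace_iff.mp hv.1
  have hpos : 0 < v ⬝ᵥ (P *ᵥ v) := by simpa using hP.dotProduct_mulVec_pos hv.2
  have hzero := dotProduct_mulVec_self_eq_zero_of_transpose_eq_neg hPM v
  rw [← mulVec_mulVec, sub_mulVec, hMv, smul_mulVec, one_mulVec, ← sub_smul, mulVec_smul,
    dotProduct_smul, smul_eq_mul] at hzero
  nlinarith [mul_eq_zero.mp hzero]

theorem Matrix.eq_zero_of_mulVec_eq_zero_of_superdiagonal_ne_zero {R : Type*} [Semiring R]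
    [NoZeroDivisors R] {n : ℕ} {M : Matrix (Fin (n + 1)) (Fin (n + 1)) R}
    (hsup : ∀ i j : Fin (n + 1), (j : ℕ) = i + 1 → M i j ≠ 0)
    (hzero : ∀ i j : Fin (n + 1), (i : ℕ) + 1 < j → M i j = 0)
    {v : Fin (n + 1) → R} (hv : M *ᵥ v = 0) (h0 : v 0 = 0) : v = 0 := by
  suffices h : ∀ m : ℕ, ∀ j : Fin (n + 1), (j : ℕ) ≤ m → v j = 0 from
    funext fun j => h j j le_rfl
  intro m
  induction m with
  | zero => intro j hj; rwa [show j = 0 from Fin.ext (by simpa using hj)]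
  | succ m ih =>
    intro j hj
    rcases Nat.lt_or_eq_of_le hj with hlt | hjm
    · exact ih j (by omega)
    · let i : Fin (n + 1) := ⟨m, by omega⟩
      have hrow : M i j * v j = 0 := by
        rw [← Fintype.sum_eq_single (f := fun l => M i l * v l) j fun l hlj => ?_]
        · exact congrFun hv i
        rcases le_or_gt (l : ℕ) m with hl | hl
        · rw [ih l hl, mul_zero]
        · have : (l : ℕ) ≠ j := fun h => hlj (Fin.ext h)
          rw [hzero i l (by simp only [i]; omega), zero_mul]
      exact (mul_eq_zero.mp hrow).resolve_left (hsup i j (by simp only [i]; omega))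

theorem Matrix.finrank_ker_toLin'_le_one_of_superdiagonal_ne_zero {K : Type*} [Field K] {n : ℕ}
    {M : Matrix (Fin (n + 1)) (Fin (n + 1)) K}
    (hsup : ∀ i j : Fin (n + 1), (j : ℕ) = i + 1 → M i j ≠ 0)
    (hzero : ∀ i j : Fin (n + 1), (i : ℕ) + 1 < j → M i j = 0) :
    finrank K (LinearMap.ker (toLin' M)) ≤ 1 := by
  have hinj : Function.Injective ((LinearMap.proj 0).comp (LinearMap.ker (toLin' M)).subtype) := by
    rw [← LinearMap.ker_eq_bot, LinearMap.ker_eq_bot']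
    rintro ⟨v, hv⟩ h0
    exact Subtype.ext (eq_zero_of_mulVec_eq_zero_of_superdiagonal_ne_zero hsup hzero
      (by simpa using hv) (by simpa using h0))
  simpa using LinearMap.finrank_le_finrank_of_injective hinj

theorem M0_sub_smul_one_eq_smul_M0_zero_one (k : ℕ) (A B : ℝ) :
    M0 k A B - A • 1 = B • M0 k 0 1 := by
  ext i j
  simp only [Matrix.sub_apply, Matrix.smul_apply, one_apply, M0, Fin.ext_iff, smul_eq_mul]
  split_ifs <;> ring

def M0Weight (k i : ℕ) : ℝ := (i.factorial * (k - i).factorial : ℕ)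

theorem M0Weight_pos (k i : ℕ) : 0 < M0Weight k i := by
  unfold M0Weight; positivity

theorem M0Weight_mul_succ {k i : ℕ} (hi : i < k) :
    M0Weight k i * (i + 1) = M0Weight k (i + 1) * (k - i) := by
  obtain ⟨m, rfl⟩ := Nat.exists_eq_add_of_lt hi
  rw [M0Weight, M0Weight, show i + m + 1 - i = m + 1 by omega,
    show i + m + 1 - (i + 1) = m by omega, Nat.factorial_succ, Nat.factorial_succ]
  push_cast
  ring

theorem transpose_diagonal_M0Weight_mul_M0_zero_one (k : ℕ) :
    (diagonal (fun i : Fin (k + 1) => M0Weight k i) * M0 k 0 1)ᵀ =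
      -(diagonal (fun i : Fin (k + 1) => M0Weight k i) * M0 k 0 1) := by
  ext i j
  simp only [transpose_apply, Matrix.neg_apply, diagonal_mul, M0]
  obtain h | h | h : (j : ℕ) = i + 1 ∨ (i : ℕ) = j + 1 ∨ (j : ℕ) ≠ i + 1 ∧ (i : ℕ) ≠ j + 1 := by
    omega
  · split_ifs <;> try omega
    rw [h]
    linear_combination M0Weight_mul_succ (k := k) (i := i) (by omega)
  · split_ifs <;> try omega
    rw [h]
    linear_combination M0Weight_mul_succ (k := k) (i := j) (by omega)
  · split_ifs <;> first | omega | simp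

theorem eq_of_hasEigenvalue_toLin'_M0 (k : ℕ) (A B : ℝ) {μ : ℝ}
    (hμ : End.HasEigenvalue (toLin' (M0 k A B)) μ) : μ = A := by
  have hP : (diagonal fun i : Fin (k + 1) => M0Weight k i).PosDef :=
    posDef_diagonal_iff.mpr fun i => M0Weight_pos k i
  refine eq_of_hasEigenvalue_toLin'_of_posDef_mul_sub_skew hP ?_ hμ
  rw [M0_sub_smul_one_eq_smul_M0_zero_one, Matrix.mul_smul, transpose_smul,
    transpose_diagonal_M0Weight_mul_M0_zero_one, smul_neg]

theorem det_M0_zero_one_of_even {k : ℕ} (hk : Even k) : (M0 k 0 1).det = 0 := by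
  have hskew := det_eq_zero_of_transpose_eq_neg (transpose_diagonal_M0Weight_mul_M0_zero_one k)
    (by simpa [Nat.odd_add_one] using hk)
  rw [det_mul, det_diagonal] at hskew
  exact (mul_eq_zero.mp hskew).resolve_left
    (Finset.prod_ne_zero_iff.mpr fun i _ => (M0Weight_pos k i).ne')

theorem finrank_ker_toLin'_M0_zero_one_of_even {k : ℕ} (hk : Even k) :
    finrank ℝ (LinearMap.ker (toLin' (M0 k 0 1))) = 1 := by
  have hle : finrank ℝ (LinearMap.ker (toLin' (M0 k 0 1))) ≤ 1 := by
    refine finrank_ker_toLin'_le_one_of_superdiagonal_ne_zero (fun i j hij => ?_) fun i j hij => ?_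
    · simp only [M0, hij, Nat.left_eq_add, one_ne_zero, ↓reduceIte, mul_one]
      positivity
    · simp only [M0]; rw [if_neg (by omega), if_neg (by omega), if_neg (by omega)]
  obtain ⟨v, hv, hNv⟩ := exists_mulVec_eq_zero_iff.mpr (det_M0_zero_one_of_even hk)
  have hpos : 1 ≤ finrank ℝ (LinearMap.ker (toLin' (M0 k 0 1))) :=
    Submodule.one_le_finrank_iff.mpr ((Submodule.ne_bot_iff _).mpr ⟨v, by simpa using hNv, hv⟩)
  omega

theorem eigenspace_toLin'_M0_self (k : ℕ) (A : ℝ) {B : ℝ} (hB : B ≠ 0) :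
    End.eigenspace (toLin' (M0 k A B)) A = LinearMap.ker (toLin' (M0 k 0 1)) := by
  rw [End.eigenspace_def, End.one_eq_id, ← toLin'_one, ← map_smul, ← map_sub,
    M0_sub_smul_one_eq_smul_M0_zero_one, map_smul, LinearMap.ker_smul _ _ hB]

/-- For even `k` and `B ≠ 0`, `λ = A` is the unique real eigenvalue of `M0`, and the
corresponding eigenspace is one-dimensional. -/
theorem M0_unique_eigenvalue_of_even (k : ℕ) (hk : Even k) (A B : ℝ) (hB : B ≠ 0) :
    (∀ lam : ℝ, Module.End.HasEigenvalue (Matrix.toLin' (M0 k A B)) lam ↔ lam = A) ∧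
    Module.finrank ℝ (Module.End.eigenspace (Matrix.toLin' (M0 k A B)) A) = 1 := by
  rw [eigenspace_toLin'_M0_self k A hB, finrank_ker_toLin'_M0_zero_one_of_even hk]
  refine ⟨fun lam => ⟨eq_of_hasEigenvalue_toLin'_M0 k A B, ?_⟩, rfl⟩
  rintro rfl
  rw [End.hasEigenvalue_iff, eigenspace_toLin'_M0_self k lam hB, ← Submodule.one_le_finrank_iff,
    finrank_ker_toLin'_M0_zero_one_of_even hk]

end
end

section
/- Let M be the (k+1)×(k+1) real tridiagonal matrix with zero diagonal, superdiagonal entries (ℓ+1)B, subdiagonal entries −(k−ℓ)B, with k even and B ≠ 0. Then the eigenvalues of M² are −(ℓB)² for ℓ ∈ {0, 2, 4, …, k}, each nonzero eigenvalue having multiplicity 2 and eigenvalue 0 having multiplicity 1; consequently ker(M²) = ker(M) and R^{k+1} = ker(M) ⊕ im(M). -/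
noncomputable section

/-- The `(k+1)×(k+1)` tridiagonal matrix with zero diagonal, superdiagonal entries
`(ℓ+1)B` and subdiagonal entries `−(k−ℓ)B` (0-indexed). -/
def M (k : ℕ) (B : ℝ) : Matrix (Fin (k+1)) (Fin (k+1)) ℝ :=
  fun i j =>
    if (j : ℕ) = (i : ℕ) + 1 then ((i : ℕ) + 1 : ℝ) * B
    else if (i : ℕ) = (j : ℕ) + 1 then -((k : ℝ) - (j : ℕ)) * B
    else 0

namespace Msq
open Polynomial Complex Finset Matrix


/-- The complex polynomial `(1+iX)^a (1-iX)^(k-a)`. -/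
def pp (k a : ℕ) : ℂ[X] := (1 + C I * X)^a * (1 - C I * X)^(k-a)

lemma natDegree_pp (k a : ℕ) (h : a ≤ k) : (pp k a).natDegree ≤ k := by
  have h1 : (1 + C I * X : ℂ[X]).natDegree ≤ 1 := by
    apply le_trans (natDegree_add_le _ _)
    simp [natDegree_C_mul_le]
  have h2 : (1 - C I * X : ℂ[X]).natDegree ≤ 1 := by
    rw [sub_eq_add_neg]
    apply le_trans (natDegree_add_le _ _)
    simp [natDegree_C_mul_le]
  calc (pp k a).natDegree ≤ _ := natDegree_mul_le
    _ ≤ a * 1 + (k-a) * 1 := by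
        gcongr <;> [exact le_trans (natDegree_pow_le) (by gcongr);
          exact le_trans (natDegree_pow_le) (by gcongr)]
    _ ≤ k := by omega

lemma coeff_pp_eq_zero (k a j : ℕ) (ha : a ≤ k) (hj : k < j) : (pp k a).coeff j = 0 :=
  coeff_eq_zero_of_natDegree_lt (lt_of_le_of_lt (natDegree_pp k a ha) hj)

lemma uv_mul : (1 + C I * X) * (1 - C I * X) = (1 + X^2 : ℂ[X]) := by
  have hI : (C I : ℂ[X]) * C I = -1 := by rw [← C_mul, I_mul_I]; simp
  linear_combination (-(X:ℂ[X])^2) * hI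

/-- helper: `C x * u^(x-1) * u = C x * u^x` for `x : ℕ`. -/
lemma nat_pow_helper (x : ℕ) (u : ℂ[X]) :
    C (x : ℂ) * u^(x-1) * u = C (x : ℂ) * u^x := by
  cases x with
  | zero => simp
  | succ n => rw [Nat.add_sub_cancel, mul_assoc, ← pow_succ]

lemma Lp (k a : ℕ) (ha : a ≤ k) :
    (1 + X^2) * derivative (pp k a) - C (k:ℂ) * X * pp k a
      = C ((2*(a:ℂ) - k) * I) * pp k a := by
  have hI : (C I : ℂ[X]) * C I = -1 := by rw [← C_mul, I_mul_I]; simp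
  set u : ℂ[X] := 1 + C I * X with hu
  set v : ℂ[X] := 1 - C I * X with hv
  have hdu : derivative u = C I := by simp [hu]
  have hdv : derivative v = -C I := by simp [hv]
  have hder : derivative (pp k a)
      = C (a:ℂ) * u^(a-1) * C I * v^(k-a) + u^a * (C ((k-a : ℕ) : ℂ)) * v^(k-a-1) * (-C I) := by
    rw [pp, derivative_mul, derivative_pow, derivative_pow, hdu, hdv]
    push_cast
    ring
  rw [hder, ← uv_mul, ← hu, ← hv]
  have e1 : (u * v) * (C (a:ℂ) * u^(a-1) * C I * v^(k-a))
      = C I * (C (a:ℂ) * u^(a-1) * u) * (v^(k-a) * v) := by ring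
  have e2 : (u * v) * (u^a * (C ((k-a:ℕ):ℂ)) * v^(k-a-1) * (-C I))
      = (-C I) * ((C ((k-a:ℕ):ℂ)) * v^(k-a-1) * v) * (u^a * u) := by ring
  rw [mul_add, e1, e2, nat_pow_helper a u, nat_pow_helper (k-a) v]
  have hcast : C (((k-a:ℕ)):ℂ) = C (k:ℂ) - C (a:ℂ) := by
    rw [Nat.cast_sub ha, C_sub]
  rw [hcast, pp, ← hu, ← hv]
  have hC : C ((2*(a:ℂ) - k) * I) = (C (2*(a:ℂ) - k)) * C I := by rw [C_mul]
  rw [hC]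
  have hC2 : C (2*(a:ℂ) - (k:ℂ)) = 2 * C (a:ℂ) - C (k:ℂ) := by
    rw [C_sub, C_mul, _root_.map_ofNat]
  rw [hC2, hu, hv]
  linear_combination (-(1 + C I * X)^a * (1 - C I * X)^(k-a) * C (k:ℂ) * X) * hI


lemma natDegree_binom_le (α β : ℂ) : (C α + C β * X : ℂ[X]).natDegree ≤ 1 :=
  le_trans (natDegree_add_le _ _)
    (max_le (by simp) (le_trans natDegree_mul_le (by simp)))

lemma natDegree_g_le (k b : ℕ) (hb : b ≤ k) (α β γ δ : ℂ) :
    ((C α + C β * X)^b * (C γ + C δ * X)^(k-b)).natDegree ≤ k := by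
  calc _ ≤ _ := natDegree_mul_le
    _ ≤ b * 1 + (k-b) * 1 := by
        gcongr <;> [exact le_trans natDegree_pow_le (by gcongr; exact natDegree_binom_le _ _);
          exact le_trans natDegree_pow_le (by gcongr; exact natDegree_binom_le _ _)]
    _ ≤ k := by omega

/-- Key substitution lemma. -/
lemma key (k b : ℕ) (hb : b ≤ k) (α β γ δ : ℂ) (u v : ℂ[X]) (hv : v ≠ 0) :
    ∑ a ∈ Finset.range (k+1),
      C (((C α + C β * X)^b * (C γ + C δ * X)^(k-b)).coeff a) * (u^a * v^(k-a))
      = (C α * v + C β * u)^b * (C γ * v + C δ * u)^(k-b) := by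
  apply eq_of_infinite_eval_eq
  apply Set.Infinite.mono (s := {x : ℂ | eval x v ≠ 0})
  swap
  · have hfin : Set.Finite {x : ℂ | IsRoot v x} := finite_setOf_isRoot hv
    have he : {x : ℂ | eval x v ≠ 0} = {x : ℂ | IsRoot v x}ᶜ := by
      ext x; simp [IsRoot]
    rw [he]
    exact Set.Finite.infinite_compl hfin
  · intro x hx
    simp only [Set.mem_setOf_eq] at hx ⊢
    rw [eval_finset_sum]
    set g : ℂ[X] := (C α + C β * X)^b * (C γ + C δ * X)^(k-b) with hg
    set ux := eval x u with hux
    set vx := eval x v with hvx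
    have hpow : ∀ a, a ≤ k → (ux/vx)^a * vx^k = ux^a * vx^(k-a) := by
      intro a ha
      rw [div_pow, div_mul_eq_mul_div, div_eq_iff (pow_ne_zero _ hx), mul_assoc, ← pow_add]
      congr 2
      omega
    have hstep : ∀ a ∈ Finset.range (k+1),
        eval x (C (g.coeff a) * (u^a * v^(k-a))) = (g.coeff a * (ux/vx)^a) * vx^k := by
      intro a ha
      simp only [Finset.mem_range] at ha
      simp only [eval_mul, eval_C, eval_pow, ← hux, ← hvx]
      rw [mul_assoc, ← hpow a (by omega)]
    rw [Finset.sum_congr rfl hstep, ← Finset.sum_mul]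
    have hdeg : g.natDegree < k + 1 := Nat.lt_succ_of_le (natDegree_g_le k b hb α β γ δ)
    rw [← eval_eq_sum_range' hdeg]
    simp only [hg, eval_mul, eval_pow, eval_add, eval_C, eval_X, ← hux, ← hvx]
    have hvk : vx ^ k = vx ^ b * vx ^ (k-b) := by rw [← pow_add]; congr 1; omega
    rw [hvk, mul_mul_mul_comm, ← mul_pow, ← mul_pow]
    congr 2 <;> field_simp <;> ring


lemma key1 (k b jn : ℕ) (hb : b ≤ k) :
    (2*(b:ℂ) - k) * I * (pp k b).coeff jn
      = ((jn:ℂ)+1) * (pp k b).coeff (jn+1)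
        + (if 2 ≤ jn then ((jn:ℂ) - 1) * (pp k b).coeff (jn-1) else 0)
        - (k:ℂ) * (if 1 ≤ jn then (pp k b).coeff (jn-1) else 0) := by
  have h := congrArg (fun q : ℂ[X] => q.coeff jn) (Lp k b hb)
  set p := pp k b with hp
  have e : (1+X^2) * derivative p - C (k:ℂ) * X * p
      = (derivative p + derivative p * X^2) - C (k:ℂ) * (p * X^1) := by ring
  rw [e, coeff_sub, coeff_add, coeff_mul_X_pow', coeff_C_mul, coeff_mul_X_pow',
    coeff_C_mul, coeff_derivative] at h
  rw [← h]
  congr 1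
  congr 1
  · push_cast; ring
  · by_cases h2 : 2 ≤ jn
    · rw [if_pos h2, if_pos h2, coeff_derivative]
      have : jn - 2 + 1 = jn - 1 := by omega
      rw [this]
      have : ((jn - 2 : ℕ) : ℂ) + 1 = (jn:ℂ) - 1 := by
        have : ((jn - 2 : ℕ) : ℂ) = (jn:ℂ) - 2 := by
          push_cast [Nat.cast_sub h2]; ring
        rw [this]; ring
      rw [this]
      ring
    · rw [if_neg h2, if_neg h2]

lemma entry_sum (k : ℕ) (B : ℝ) (b jn : ℕ) (hb : b ≤ k) (hj : jn ≤ k) :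
    ((jn:ℂ)+1)*(B:ℂ)*(pp k b).coeff (jn+1)
      + (if 1 ≤ jn then -((k:ℂ) - ((jn-1:ℕ):ℂ))*(B:ℂ)*(pp k b).coeff (jn-1) else 0)
    = (pp k b).coeff jn * ((2*(b:ℂ) - k) * I * (B:ℂ)) := by
  have h := key1 k b jn hb
  have hgoal : (pp k b).coeff jn * ((2*(b:ℂ) - k) * I * B)
      = ((2*(b:ℂ) - k) * I * (pp k b).coeff jn) * B := by ring
  rw [hgoal, h]
  rcases Nat.lt_or_ge jn 1 with h1 | h1
  · have : jn = 0 := by omega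
    subst this
    simp
    ring
  · rcases Nat.lt_or_ge jn 2 with h2 | h2
    · have : jn = 1 := by omega
      subst this
      norm_num
      ring
    · rw [if_pos h1, if_pos h2, if_pos h1]
      have hc : ((jn - 1 : ℕ) : ℂ) = (jn:ℂ) - 1 := by
        push_cast [Nat.cast_sub (by omega : 1 ≤ jn)]; ring
      rw [hc]
      ring


def Pm (k : ℕ) : Matrix (Fin (k+1)) (Fin (k+1)) ℂ := fun j a => (pp k (a:ℕ)).coeff (j:ℕ)

def Dm (k : ℕ) (B : ℝ) : Matrix (Fin (k+1)) (Fin (k+1)) ℂ :=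
  Matrix.diagonal fun a => (2*((a:ℕ):ℂ) - (k:ℂ)) * I * (B:ℂ)

lemma MP_eq_PD (k : ℕ) (B : ℝ) :
    (M k B).map (algebraMap ℝ ℂ) * Pm k = Pm k * Dm k B := by
  ext j b
  rw [Matrix.mul_apply, Dm, Matrix.mul_diagonal]
  set c : ℕ → ℂ := fun l => (pp k (b:ℕ)).coeff l with hc
  set jn := (j : ℕ) with hjn
  have hj : jn ≤ k := by omega
  have step1 : ∑ l : Fin (k+1), ((M k B).map (algebraMap ℝ ℂ)) j l * Pm k l b
      = ∑ l ∈ Finset.range (k+1),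
          (if l = jn+1 then ((jn:ℂ)+1)*(B:ℂ)
            else if jn = l+1 then -((k:ℂ) - (l:ℂ))*(B:ℂ) else 0) * c l := by
    rw [← Fin.sum_univ_eq_sum_range]
    apply Finset.sum_congr rfl
    intro l _
    simp only [Matrix.map_apply, M, Pm, ← hc, ← hjn]
    rw [apply_ite (algebraMap ℝ ℂ), apply_ite (algebraMap ℝ ℂ)]
    push_cast
    rfl
  rw [step1]
  have hsplit : ∀ l ∈ Finset.range (k+1),
      (if l = jn+1 then ((jn:ℂ)+1)*(B:ℂ)
        else if jn = l+1 then -((k:ℂ) - (l:ℂ))*(B:ℂ) else 0) * c l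
      = (if l = jn+1 then ((jn:ℂ)+1)*(B:ℂ)*c l else 0)
        + (if jn = l+1 then -((k:ℂ) - (l:ℂ))*(B:ℂ)*c l else 0) := by
    intro l _
    by_cases h1 : l = jn + 1
    · rw [if_pos h1, if_pos h1, if_neg (by omega), add_zero]
    · rw [if_neg h1, if_neg h1, zero_add]
      by_cases h2 : jn = l + 1
      · rw [if_pos h2, if_pos h2]
      · rw [if_neg h2, if_neg h2, zero_mul]
  rw [Finset.sum_congr rfl hsplit, Finset.sum_add_distrib]
  have hsum1 : ∑ l ∈ Finset.range (k+1), (if l = jn+1 then ((jn:ℂ)+1)*(B:ℂ)*c l else 0)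
      = ((jn:ℂ)+1)*(B:ℂ)*c (jn+1) := by
    rw [Finset.sum_ite_eq' (Finset.range (k+1)) (jn+1) (fun l => ((jn:ℂ)+1)*(B:ℂ)*c l)]
    by_cases hmem : jn + 1 ∈ Finset.range (k+1)
    · rw [if_pos hmem]
    · rw [if_neg hmem]
      have : k < jn + 1 := by
        simp only [Finset.mem_range] at hmem; omega
      rw [hc]
      simp only
      rw [coeff_pp_eq_zero k (b:ℕ) (jn+1) (by omega) this, mul_zero]
  have hsum2 : ∑ l ∈ Finset.range (k+1), (if jn = l+1 then -((k:ℂ) - (l:ℂ))*(B:ℂ)*c l else 0)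
      = (if 1 ≤ jn then -((k:ℂ) - ((jn-1:ℕ):ℂ))*(B:ℂ)*c (jn-1) else 0) := by
    rcases Nat.eq_zero_or_pos jn with h0 | h0
    · rw [if_neg (by omega)]
      apply Finset.sum_eq_zero
      intro l _
      rw [if_neg (by omega)]
    · obtain ⟨m, hm⟩ : ∃ m, jn = m + 1 := ⟨jn - 1, by omega⟩
      rw [if_pos (by omega : 1 ≤ jn)]
      have hcond : ∀ l : ℕ, (jn = l + 1) = (l = m) := by
        intro l
        simp only [hm, eq_iff_iff]
        omega
      simp only [hcond]
      rw [Finset.sum_ite_eq' (Finset.range (k+1)) m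
        (fun l => -((k:ℂ) - (l:ℂ))*(B:ℂ)*c l)]
      rw [if_pos (by simp only [Finset.mem_range]; omega)]
      have : jn - 1 = m := by omega
      rw [this]
  rw [hsum1, hsum2]
  show _ = c jn * _
  rw [← entry_sum k B (b:ℕ) jn (by omega) hj]


def Rm (k : ℕ) : Matrix (Fin (k+1)) (Fin (k+1)) ℂ :=
  fun j a => ((1 - X)^(a:ℕ) * (1 + X)^(k-(a:ℕ)) : ℂ[X]).coeff (j:ℕ)

lemma oneSubIX_ne : (1 - C I * X : ℂ[X]) ≠ 0 := by
  intro h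
  have := congrArg (fun q : ℂ[X] => q.coeff 0) h
  simp at this

lemma onePlusX_ne : (1 + X : ℂ[X]) ≠ 0 := by
  intro h
  have := congrArg (fun q : ℂ[X] => q.coeff 0) h
  simp at this

lemma sum_coeff_form (k : ℕ) (j b : Fin (k+1)) (q : ℕ → ℂ[X]) (g : ℂ[X]) :
    ∑ a : Fin (k+1), (q (a:ℕ)).coeff (j:ℕ) * g.coeff (a:ℕ)
      = (∑ a ∈ Finset.range (k+1), C (g.coeff a) * q a).coeff (j:ℕ) := by
  rw [finset_sum_coeff]
  rw [← Fin.sum_univ_eq_sum_range (fun a => (C (g.coeff a) * q a).coeff (j:ℕ))]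
  apply Finset.sum_congr rfl
  intro a _
  rw [coeff_C_mul]
  ring

lemma PP_eq (k : ℕ) :
    Pm k * Pm k = Rm k * Matrix.diagonal (fun b : Fin (k+1) => (1+I)^(b:ℕ) * (1-I)^(k-(b:ℕ))) := by
  have hI : (C I : ℂ[X]) * C I = -1 := by rw [← C_mul, I_mul_I]; simp
  ext j b
  rw [Matrix.mul_apply, Matrix.mul_diagonal]
  have e0 : ∀ a : Fin (k+1), Pm k j a * Pm k a b
      = (pp k (a:ℕ)).coeff (j:ℕ) * (pp k (b:ℕ)).coeff (a:ℕ) := fun a => rfl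
  simp only [e0]
  rw [sum_coeff_form k j b (fun a => pp k a) (pp k (b:ℕ))]
  have hgb : ∀ a : ℕ, (pp k (b:ℕ)).coeff a
      = (((C 1 + C I * X)^(b:ℕ) * (C (1:ℂ) + C (-I) * X)^(k-(b:ℕ))).coeff a) := by
    intro a
    congr 1
    simp only [pp, _root_.map_one, _root_.map_neg]
    ring
  simp only [hgb]
  have hk := key k (b:ℕ) b.is_le 1 I 1 (-I) (1 + C I * X) (1 - C I * X) oneSubIX_ne
  have hpp : ∀ a : ℕ, (1 + C I * X : ℂ[X])^a * (1 - C I * X)^(k-a) = pp k a := fun a => rfl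
  simp only [hpp] at hk
  rw [hk]
  have e1 : (C (1:ℂ)) * (1 - C I * X) + C I * (1 + C I * X) = C (1+I) * (1 - X) := by
    simp only [_root_.map_one, _root_.map_add]
    linear_combination (X : ℂ[X]) * hI
  have e2 : (C (1:ℂ)) * (1 - C I * X) + C (-I) * (1 + C I * X) = C (1-I) * (1 + X) := by
    simp only [_root_.map_one, _root_.map_neg, _root_.map_sub]
    linear_combination (-(X : ℂ[X])) * hI
  rw [e1, e2]
  rw [mul_pow, mul_pow, ← C_pow, ← C_pow]
  rw [show (C ((1+I)^(b:ℕ)) * (1-X)^(b:ℕ)) * (C ((1-I)^(k-(b:ℕ))) * (1+X)^(k-(b:ℕ)))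
      = C ((1+I)^(b:ℕ)) * C ((1-I)^(k-(b:ℕ))) * ((1-X)^(b:ℕ) * (1+X)^(k-(b:ℕ))) from by ring]
  rw [← C_mul, coeff_C_mul]
  rw [Rm]
  ring

lemma RR_eq (k : ℕ) : Rm k * Rm k = ((2:ℂ)^k) • (1 : Matrix (Fin (k+1)) (Fin (k+1)) ℂ) := by
  ext j b
  rw [Matrix.mul_apply, Matrix.smul_apply, Matrix.one_apply]
  have e0 : ∀ a : Fin (k+1), Rm k j a * Rm k a b
      = ((1 - X)^(a:ℕ) * (1 + X)^(k-(a:ℕ)) : ℂ[X]).coeff (j:ℕ)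
        * ((1 - X)^(b:ℕ) * (1 + X)^(k-(b:ℕ)) : ℂ[X]).coeff (a:ℕ) := fun a => rfl
  simp only [e0]
  rw [sum_coeff_form k j b (fun a => (1 - X)^a * (1 + X)^(k-a)) _]
  have hgb : ∀ a : ℕ, ((1 - X)^(b:ℕ) * (1 + X)^(k-(b:ℕ)) : ℂ[X]).coeff a
      = (((C 1 + C (-1:ℂ) * X)^(b:ℕ) * (C (1:ℂ) + C (1:ℂ) * X)^(k-(b:ℕ))).coeff a) := by
    intro a
    congr 1
    simp only [_root_.map_one, _root_.map_neg]
    ring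
  simp only [hgb]
  have hk := key k (b:ℕ) b.is_le 1 (-1) 1 1 (1 - X) (1 + X) onePlusX_ne
  rw [hk]
  have e1 : (C (1:ℂ)) * (1 + X) + C (-1:ℂ) * (1 - X) = C 2 * X := by
    simp only [_root_.map_one, _root_.map_neg]
    ring_nf
    simp [_root_.map_ofNat]
  have e2 : (C (1:ℂ)) * (1 + X) + C (1:ℂ) * (1 - X) = C 2 := by
    simp only [_root_.map_one]
    ring_nf
    simp [_root_.map_ofNat]
  rw [e1, e2, mul_pow, ← C_pow, ← C_pow]
  rw [show C ((2:ℂ)^(b:ℕ)) * X^(b:ℕ) * C ((2:ℂ)^(k-(b:ℕ)))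
      = C ((2:ℂ)^(b:ℕ) * (2:ℂ)^(k-(b:ℕ))) * X^(b:ℕ) from by rw [C_mul]; ring]
  have h2k : (2:ℂ)^(b:ℕ) * (2:ℂ)^(k-(b:ℕ)) = 2^k := by
    rw [← pow_add]
    congr 1
    omega
  rw [h2k, coeff_C_mul, coeff_X_pow, smul_eq_mul]
  by_cases hjb : j = b
  · subst hjb; simp
  · rw [if_neg hjb, if_neg (show ¬ (j:ℕ) = (b:ℕ) from fun h => hjb (Fin.ext h))]


lemma charpoly_conj (n : ℕ) (P A : Matrix (Fin n) (Fin n) ℂ) (h : IsUnit P) :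
    (P * A * P⁻¹).charpoly = A.charpoly := by
  have hdet : IsUnit P.det := (Matrix.isUnit_iff_isUnit_det P).mp h
  have hPinv : P * P⁻¹ = 1 := Matrix.mul_nonsing_inv P hdet
  have hscalar : Matrix.scalar (Fin n) (X : ℂ[X])
      = (X : ℂ[X]) • (1 : Matrix (Fin n) (Fin n) ℂ[X]) := by
    ext i j
    by_cases hij : i = j <;>
      simp [Matrix.scalar_apply, Matrix.one_apply, hij, Matrix.diagonal_apply]
  have hone : (1 : Matrix (Fin n) (Fin n) ℂ).map (C : ℂ →+* ℂ[X]) = 1 :=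
    Matrix.map_one _ (_root_.map_zero _) (_root_.map_one _)
  have hcm : P.map (C : ℂ →+* ℂ[X]) * charmatrix A * (P⁻¹).map (C : ℂ →+* ℂ[X])
      = charmatrix (P * A * P⁻¹) := by
    rw [charmatrix, charmatrix, hscalar, Matrix.mul_sub, Matrix.sub_mul]
    congr 1
    · rw [Matrix.mul_smul, Matrix.smul_mul, Matrix.mul_one, ← Matrix.map_mul, hPinv, hone]
    · simp only [RingHom.mapMatrix_apply]
      rw [← Matrix.map_mul, ← Matrix.map_mul]
  have h1 : (P.map (C : ℂ →+* ℂ[X])).det * ((P⁻¹).map (C : ℂ →+* ℂ[X])).det = 1 := by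
    rw [← det_mul, ← Matrix.map_mul, hPinv, hone, det_one]
  rw [Matrix.charpoly, Matrix.charpoly, ← hcm, det_mul, det_mul, mul_right_comm, h1, one_mul]

lemma charpoly_diagonal (n : ℕ) (d : Fin n → ℂ) :
    (Matrix.diagonal d).charpoly = ∏ i : Fin n, (X - C (d i)) := by
  rw [Matrix.charpoly_of_upperTriangular _ (Matrix.blockTriangular_diagonal d)]
  apply Finset.prod_congr rfl
  intro i _
  rw [Matrix.diagonal_apply_eq]


lemma isUnit_Pm (k : ℕ) : IsUnit (Pm k) := by
  have h1I : (1 + I) ≠ 0 := by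
    intro h
    have := congrArg Complex.im h
    simp at this
  have h2I : (1 - I) ≠ 0 := by
    intro h
    have := congrArg Complex.im h
    simp at this
  have hRdet : (Rm k).det ≠ 0 := by
    intro h
    have := congrArg Matrix.det (RR_eq k)
    rw [det_mul, h, mul_zero, Matrix.det_smul, det_one] at this
    have h2 : ((2:ℂ)^k)^(Fintype.card (Fin (k+1))) ≠ 0 := by
      apply pow_ne_zero; apply pow_ne_zero; norm_num
    simp at this
    exact h2 (by simpa using this.symm)
  have hPdet : (Pm k).det ≠ 0 := by
    intro h
    have := congrArg Matrix.det (PP_eq k)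
    rw [det_mul, h, mul_zero, det_mul, det_diagonal] at this
    have hprod : ∏ b : Fin (k+1), ((1+I)^(b:ℕ) * (1-I)^(k-(b:ℕ))) ≠ 0 := by
      apply Finset.prod_ne_zero_iff.mpr
      intro b _
      exact mul_ne_zero (pow_ne_zero _ h1I) (pow_ne_zero _ h2I)
    exact hprod (by
      rcases mul_eq_zero.mp this.symm with h' | h'
      · exact absurd h' hRdet
      · exact h')
  rw [Matrix.isUnit_iff_isUnit_det]
  exact isUnit_iff_ne_zero.mpr hPdet

lemma prod_eigen (n : ℕ) (B : ℝ) :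
    ∏ a ∈ Finset.range (2*n+1), ((X:ℂ[X]) + C (((2*(a:ℂ) - 2*(n:ℂ)) * (B:ℂ))^2))
      = X * ∏ j ∈ Finset.range n, ((X:ℂ[X]) + C ((2*((j:ℂ)+1) * (B:ℂ))^2))^2 := by
  have h1 : 2*n+1 = (n+1) + n := by omega
  rw [h1, Finset.prod_range_add, Finset.prod_range_succ]
  have hfn : ((X:ℂ[X]) + C (((2*(n:ℂ) - 2*(n:ℂ)) * (B:ℂ))^2)) = X := by
    rw [show (2*(n:ℂ) - 2*(n:ℂ)) = 0 from by ring]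
    simp
  have hrefl : ∏ a ∈ Finset.range n, ((X:ℂ[X]) + C (((2*(a:ℂ) - 2*(n:ℂ)) * (B:ℂ))^2))
      = ∏ j ∈ Finset.range n, ((X:ℂ[X]) + C ((2*((j:ℂ)+1) * (B:ℂ))^2)) := by
    rw [← Finset.prod_range_reflect
      (fun j => (X:ℂ[X]) + C ((2*((j:ℂ)+1) * (B:ℂ))^2)) n]
    apply Finset.prod_congr rfl
    intro a ha
    simp only [Finset.mem_range] at ha
    congr 2
    have h2 : n - 1 - a = n - (1+a) := by omega
    rw [h2, Nat.cast_sub (by omega : 1 + a ≤ n)]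
    push_cast
    ring
  have hshift : ∏ x ∈ Finset.range n, ((X:ℂ[X]) + C (((2*(((n+1+x):ℕ):ℂ) - 2*(n:ℂ)) * (B:ℂ))^2))
      = ∏ j ∈ Finset.range n, ((X:ℂ[X]) + C ((2*((j:ℂ)+1) * (B:ℂ))^2)) := by
    apply Finset.prod_congr rfl
    intro x _
    congr 2
    push_cast
    ring
  rw [hfn, hrefl, hshift, Finset.prod_pow]
  ring


open Polynomial in
lemma charpoly_part (k : ℕ) (hk : Even k) (B : ℝ) :
    (M k B ^ 2).charpoly
      = X * ∏ j ∈ Finset.range (k/2), (X + C ((2*((j : ℝ)+1) * B)^2))^2 := by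
  obtain ⟨n, hn⟩ := hk
  apply Polynomial.map_injective (algebraMap ℝ ℂ) (RingHom.injective _)
  rw [← Matrix.charpoly_map]
  rw [show (M k B ^ 2).map (algebraMap ℝ ℂ) = ((M k B).map (algebraMap ℝ ℂ))^2 from by
    rw [pow_two, pow_two, Matrix.map_mul]]
  have hP := isUnit_Pm k
  have hPdet : IsUnit (Pm k).det := (Matrix.isUnit_iff_isUnit_det _).mp hP
  have hA : (M k B).map (algebraMap ℝ ℂ) = Pm k * Dm k B * (Pm k)⁻¹ := by
    rw [← MP_eq_PD, Matrix.mul_assoc, Matrix.mul_nonsing_inv _ hPdet, Matrix.mul_one]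
  have hA2 : ((M k B).map (algebraMap ℝ ℂ))^2
      = Pm k * (Dm k B * Dm k B) * (Pm k)⁻¹ := by
    rw [hA, pow_two]
    have e : (Pm k * Dm k B * (Pm k)⁻¹) * (Pm k * Dm k B * (Pm k)⁻¹)
        = Pm k * (Dm k B * (((Pm k)⁻¹ * Pm k) * (Dm k B * (Pm k)⁻¹))) := by
      simp only [Matrix.mul_assoc]
    rw [e, Matrix.nonsing_inv_mul _ hPdet, Matrix.one_mul]
    simp only [Matrix.mul_assoc]
  rw [hA2, charpoly_conj _ _ _ hP, Dm, Matrix.diagonal_mul_diagonal, charpoly_diagonal]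
  have hd : ∀ i : Fin (k+1),
      (X:ℂ[X]) - C ((2*((i:ℕ):ℂ) - (k:ℂ)) * I * (B:ℂ) * ((2*((i:ℕ):ℂ) - (k:ℂ)) * I * (B:ℂ)))
        = (X:ℂ[X]) + C (((2*((i:ℕ):ℂ) - 2*(n:ℂ)) * (B:ℂ))^2) := by
    intro i
    rw [sub_eq_add_neg, ← C_neg]
    congr 2
    have hI : I * I = -1 := I_mul_I
    have hkc : (k:ℂ) = 2*(n:ℂ) := by rw [hn]; push_cast; ring
    rw [hkc]
    linear_combination ((-((2*((i:ℕ):ℂ) - 2*(n:ℂ))^2 * ((B:ℂ))^2)) : ℂ) * hI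
  simp only [hd]
  rw [Fin.prod_univ_eq_prod_range
    (fun a : ℕ => (X:ℂ[X]) + C (((2*(a:ℂ) - 2*(n:ℂ)) * (B:ℂ))^2)) (k+1)]
  rw [show k + 1 = 2*n+1 from by omega]
  rw [prod_eigen n B]
  rw [Polynomial.map_mul, Polynomial.map_X]
  congr 1
  rw [show k/2 = n from by omega]
  rw [Polynomial.map_prod]
  apply Finset.prod_congr rfl
  intro j _
  rw [Polynomial.map_pow, Polynomial.map_add, Polynomial.map_X, Polynomial.map_C]
  have : (algebraMap ℝ ℂ) ((2*((j:ℝ)+1) * B)^2) = (2*((j:ℂ)+1) * (B:ℂ))^2 := by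
    rw [show ((algebraMap ℝ ℂ) : ℝ → ℂ) = Complex.ofReal from Complex.coe_algebraMap]
    push_cast
    ring
  rw [this]


def w (k : ℕ) (i : Fin (k+1)) : ℝ := ((k.choose i : ℝ))⁻¹

lemma choose_cast_pos (k i : ℕ) (h : i ≤ k) : (0:ℝ) < (k.choose i : ℝ) := by
  exact_mod_cast Nat.choose_pos h

lemma w_pos (k : ℕ) (i : Fin (k+1)) : 0 < w k i :=
  inv_pos.mpr (choose_cast_pos k i i.is_le)

lemma key_choose (k i : ℕ) (hik : i < k) :
    ((i:ℝ)+1) * (k.choose (i+1)) = ((k:ℝ) - i) * k.choose i := by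
  have h := Nat.choose_succ_right_eq k i
  have h2 : ((k.choose (i+1) * (i+1) : ℕ) : ℝ) = ((k.choose i * (k - i) : ℕ) : ℝ) := by
    exact_mod_cast congrArg (fun x : ℕ => (x:ℝ)) h
  push_cast [Nat.cast_sub hik.le] at h2
  linarith

lemma skew (k : ℕ) (B : ℝ) (i l : Fin (k+1)) :
    w k i * M k B i l = -(w k l * M k B l i) := by
  have hi : (i : ℕ) ≤ k := i.is_le
  have hl : (l : ℕ) ≤ k := l.is_le
  by_cases h1 : (l : ℕ) = (i : ℕ) + 1
  · have hik : (i:ℕ) < k := by omega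
    have hc1 := choose_cast_pos k i hi
    have hc2 := choose_cast_pos k ((i:ℕ)+1) (by omega)
    have hkey := key_choose k i hik
    simp only [M, w, h1, if_pos rfl, if_neg (show (i:ℕ) ≠ (i:ℕ)+1+1 by omega),
      if_neg (show ¬ (i:ℕ) = (i:ℕ)+1+1 by omega)]
    rw [if_true, if_true]
    field_simp
    linear_combination B * hkey
  · by_cases h2 : (i : ℕ) = (l : ℕ) + 1
    · have hlk : (l:ℕ) < k := by omega
      have hc1 := choose_cast_pos k l hl
      have hc2 := choose_cast_pos k ((l:ℕ)+1) (by omega)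
      have hkey := key_choose k l hlk
      simp only [M, w, h2, if_neg (show ¬ (l:ℕ) = (l:ℕ)+1+1 by omega), if_pos rfl]
      simp only [if_true]
      field_simp
      linear_combination B * hkey
    · simp only [M, w, if_neg h1, if_neg h2]
      ring


open Finset in
lemma skew_sum (k : ℕ) (B : ℝ) (x y : Fin (k+1) → ℝ) :
    ∑ i, w k i * ((M k B).mulVec x) i * y i
      = - ∑ i, w k i * x i * ((M k B).mulVec y) i := by
  have l1 : ∀ i, w k i * ((M k B).mulVec x) i * y i
      = ∑ l, (w k i * M k B i l) * x l * y i := by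
    intro i
    simp only [Matrix.mulVec, dotProduct, Finset.mul_sum, Finset.sum_mul]
    exact Finset.sum_congr rfl fun l _ => by ring
  have l2 : ∀ l, w k l * x l * ((M k B).mulVec y) l
      = ∑ i, (w k l * M k B l i) * x l * y i := by
    intro l
    simp only [Matrix.mulVec, dotProduct, Finset.mul_sum, Finset.sum_mul]
    exact Finset.sum_congr rfl fun i _ => by ring
  simp only [l1, l2]
  rw [Finset.sum_comm, ← Finset.sum_neg_distrib]
  congr 1; ext l
  rw [← Finset.sum_neg_distrib]
  congr 1; ext i
  rw [skew]; ring

lemma ker_sq (k : ℕ) (B : ℝ) (v : Fin (k+1) → ℝ)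
    (h : (M k B).mulVec ((M k B).mulVec v) = 0) : (M k B).mulVec v = 0 := by
  set z := (M k B).mulVec v with hz
  have h0 : ∑ i, w k i * z i * z i = 0 := by
    rw [hz, skew_sum]
    rw [← hz, h]
    simp
  have hnn : ∀ i ∈ Finset.univ, 0 ≤ w k i * z i * z i := by
    intro i _
    have := w_pos k i
    nlinarith [sq_nonneg (z i)]
  have := (Finset.sum_eq_zero_iff_of_nonneg hnn).mp h0
  funext i
  have hi := this i (Finset.mem_univ i)
  have hw := w_pos k i
  have : z i * z i = 0 := by
    by_contra hne
    have : w k i * z i * z i ≠ 0 := by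
      rw [mul_assoc]
      exact mul_ne_zero (ne_of_gt hw) hne
    exact this hi
  have := mul_self_eq_zero.mp this
  simpa using this

lemma ker_eq (k : ℕ) (B : ℝ) :
    LinearMap.ker (Matrix.toLin' (M k B ^ 2)) = LinearMap.ker (Matrix.toLin' (M k B)) := by
  ext v
  simp only [LinearMap.mem_ker, Matrix.toLin'_apply, pow_two, ← Matrix.mulVec_mulVec]
  constructor
  · exact ker_sq k B v
  · intro h; rw [h]; simp

lemma compl (k : ℕ) (B : ℝ) :
    IsCompl (LinearMap.ker (Matrix.toLin' (M k B)))
        (LinearMap.range (Matrix.toLin' (M k B))) := by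
  set f := Matrix.toLin' (M k B)
  have hdisj : Disjoint (LinearMap.ker f) (LinearMap.range f) := by
    rw [Submodule.disjoint_def]
    intro x hker hran
    obtain ⟨y, hy⟩ := hran
    have h2 : (M k B).mulVec ((M k B).mulVec y) = 0 := by
      have : f x = 0 := hker
      rw [← hy] at this
      simpa [f, Matrix.toLin'_apply] using this
    have := ker_sq k B y h2
    rw [← hy]
    simpa [f, Matrix.toLin'_apply] using this
  constructor
  · exact hdisj
  · rw [codisjoint_iff]
    apply Submodule.eq_top_of_disjoint
    · have := LinearMap.finrank_range_add_finrank_ker f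
      omega
    · exact hdisj


end Msq

open Polynomial in
/-- For even `k` and `B ≠ 0`: the eigenvalues of `M²` are `−(ℓB)²` for
`ℓ ∈ {0,2,4,…,k}`, the nonzero ones with multiplicity `2` and `0` with multiplicity `1`
(i.e. the characteristic polynomial of `M²` is `λ·∏_{j even, 2≤j≤k}(λ + (jB)²)²`);
consequently `ker(M²) = ker(M)` and `ℝ^{k+1} = ker M ⊕ im M`. -/
theorem Msq_charpoly_and_ker_im (k : ℕ) (hk : Even k) (B : ℝ) (hB : B ≠ 0) :
    ((M k B ^ 2).charpoly
        = X * ∏ j ∈ Finset.range (k/2), (X + C ((2*((j : ℝ)+1) * B)^2))^2) ∧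
    LinearMap.ker (Matrix.toLin' (M k B ^ 2)) = LinearMap.ker (Matrix.toLin' (M k B)) ∧
    IsCompl (LinearMap.ker (Matrix.toLin' (M k B)))
        (LinearMap.range (Matrix.toLin' (M k B))) :=
  ⟨Msq.charpoly_part k hk B, Msq.ker_eq k B, Msq.compl k B⟩

end
end

section
/- Let p1, p2 be polynomials in R[x1,x2,x3] such that p1·x1 − p2·x2 is divisible by x1² + x2². Then p1·x2 + p2·x1 is also divisible by x1² + x2². -/
open MvPolynomial

/-! Modulo `a² + b²` we have `a * (p₁ b + p₂ a) ≡ b * (p₁ a - p₂ b)`, so `a² + b²` divides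
`a * (p₁ b + p₂ a)`. For `a = x₁`, `b = x₂` the factor `x₁` can be cancelled: `x₁` is prime and
does not divide `x₁² + x₂²` (evaluate at `x₁ = 0`, `x₂ = 1`). -/

theorem sq_add_sq_dvd_mul_add_mul_of_dvd_mul_sub_mul {R : Type*} [CommRing R]
    [DecompositionMonoid R] {a b p₁ p₂ : R} (hrel : IsRelPrime (a ^ 2 + b ^ 2) a)
    (h : a ^ 2 + b ^ 2 ∣ p₁ * a - p₂ * b) : a ^ 2 + b ^ 2 ∣ p₁ * b + p₂ * a := by
  refine hrel.dvd_of_dvd_mul_left ?_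
  have key : a * (p₁ * b + p₂ * a) = b * (p₁ * a - p₂ * b) + p₂ * (a ^ 2 + b ^ 2) := by ring
  rw [key]
  exact dvd_add (dvd_mul_of_dvd_right h b) (dvd_mul_left _ _)

theorem MvPolynomial.isRelPrime_X_sq_add_X_sq_X {σ R : Type*} [CommRing R] [IsDomain R]
    {i j : σ} (hij : i ≠ j) : IsRelPrime (X i ^ 2 + X j ^ 2 : MvPolynomial σ R) (X i) := by
  classical
  rw [isRelPrime_comm, X_prime.irreducible.isRelPrime_iff_not_dvd]
  rintro ⟨g, hg⟩
  have := congrArg (eval (Pi.single j 1)) hg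
  simp [hij] at this

/-- If `p1·x1 − p2·x2` is divisible by `x1² + x2²` in `ℝ[x1,x2,x3]`, then
`p1·x2 + p2·x1` is also divisible by `x1² + x2²`. -/
theorem dvd_p1x2_add_p2x1_of_dvd_p1x1_sub_p2x2 (p1 p2 : MvPolynomial (Fin 3) ℝ)
    (h : (X 0 ^ 2 + X 1 ^ 2 : MvPolynomial (Fin 3) ℝ) ∣ p1 * X 0 - p2 * X 1) :
    (X 0 ^ 2 + X 1 ^ 2 : MvPolynomial (Fin 3) ℝ) ∣ p1 * X 1 + p2 * X 0 :=
  sq_add_sq_dvd_mul_add_mul_of_dvd_mul_sub_mul (isRelPrime_X_sq_add_X_sq_X (by decide)) h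
end
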